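/- arXiv:2412.11628 — 8 statements merged into one kernel-verified Lean document; each statement's English description precedes it below -/
import Mathlib

section
/- Let c be a positive integer and define n : {0,1}^c → ℤ by n(λ) = Σ_{i : λ_i = 1} (c − 2i + 1). Then n(0,…,0) = 0; whenever λ, λ' ∈ {0,1}^c satisfy λ_j = λ'_j for all j ≠ l, λ_l = 1 and λ'_l = 0, one has n(λ) − n(λ') = c − 2l + 1; and in R one has the expansion (X'_k)^c = Σ_{λ ∈ {0,1}^c} t^{n(λ)} · X(−c·e_k + (Σ_i λ_i)·(b_k)_+ + (c − Σ_i λ_i)·(b_k)_−). -/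
/-- The `i`-th standard basis vector of `ℤ^m`. -/
def stdE {m : ℕ} (i : Fin m) : Fin m → ℤ := Pi.single i 1

/-- Positive part `[b]_+` of a vector, taken entrywise. -/
def bPlus {m : ℕ} (b : Fin m → ℤ) : Fin m → ℤ := fun j => max (b j) 0

/-- `bMinus b j = [-b_j]_+`. -/
def bMinus {m : ℕ} (b : Fin m → ℤ) : Fin m → ℤ := fun j => max (-(b j)) 0

/-- The `j`-th column of an `m × m` integer matrix, as a vector in `ℤ^m`. -/
def col {m : ℕ} (M : Fin m → Fin m → ℤ) (j : Fin m) : Fin m → ℤ := fun i => M i j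

/-- The normalized monomial
`(X')^a = t^{-Σ_{i<j} a_i a_j Λ'(e_i,e_j)} · (X'_1)^{a_1} ⋯ (X'_m)^{a_m}`
(ordered product), where `Lam' i j` encodes `Λ'(e_i, e_j)`. -/
def XpPow {m : ℕ} {R : Type*} [Ring R] (t : Rˣ) (Lam' : Fin m → Fin m → ℤ)
    (X' : Fin m → Rˣ) (a : Fin m → ℤ) : Rˣ :=
  t ^ (-(∑ i : Fin m, ∑ j : Fin m, if i < j then a i * a j * Lam' i j else 0)) *
    ((List.finRange m).map (fun i => X' i ^ a i)).prod

/-- `n(λ) = Σ_{i : λ_i = 1} (c - 2i + 1)` (indices `1,…,c`, so `i : Fin c` stands for `i+1`). -/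
def nval (c : ℕ) (lam : Fin c → Bool) : ℤ :=
  ∑ i : Fin c, if lam i then ((c : ℤ) - 2 * (((i : ℕ) : ℤ) + 1) + 1) else 0

/-- Noncommutative binomial expansion: `(A+B)^c` as a sum over words in `{A,B}`. -/
lemma add_pow_words {R : Type*} [Semiring R] (A B : R) :
    ∀ c : ℕ, (A + B) ^ c =
      ∑ lam : Fin c → Bool, ((List.finRange c).map (fun i => if lam i then A else B)).prod
  | 0 => by simp
  | (c+1) => by
    rw [pow_succ', add_pow_words A B c, Finset.mul_sum]
    rw [← (Fin.consEquiv (fun _ : Fin (c+1) => Bool)).sum_comp]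
    rw [Fintype.sum_prod_type]
    simp only [Fin.consEquiv_apply, List.finRange_succ, List.map_cons, List.prod_cons,
      List.map_map]
    rw [Fintype.sum_bool]
    simp [add_mul, Finset.sum_add_distrib, Function.comp_def]

/-- Product of quantum-torus monomials along a word. -/
lemma listProdX {m : ℕ} {R : Type*} [Ring R] (t : Rˣ)
    (Λ : (Fin m → ℤ) →ₗ[ℤ] (Fin m → ℤ) →ₗ[ℤ] ℤ)
    (X : (Fin m → ℤ) → Rˣ)
    (hX0 : X 0 = 1)
    (hXmul : ∀ g h, X g * X h = t ^ (Λ g h) * X (g + h))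
    (hcomm : ∀ (g : Fin m → ℤ) (z : ℤ), Commute (t ^ z) (X g)) :
    ∀ (c : ℕ) (w : Fin c → (Fin m → ℤ)),
      ((List.finRange c).map (fun i => X (w i))).prod
        = t ^ (∑ i : Fin c, ∑ j : Fin c, if i < j then Λ (w i) (w j) else 0) * X (∑ i, w i)
  | 0, w => by simp [hX0]
  | (c+1), w => by
    rw [List.finRange_succ, List.map_cons, List.prod_cons, List.map_map]
    have IH := listProdX t Λ X hX0 hXmul hcomm c (fun i => w i.succ)
    simp only [Function.comp_def] at IH ⊢
    rw [IH, ← mul_assoc, ← (hcomm (w 0) _).eq, mul_assoc, hXmul, ← mul_assoc, ← zpow_add]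
    congr 1
    · congr 1
      rw [Fin.sum_univ_succ]
      have h0 : ∑ j : Fin (c+1), (if (0 : Fin (c+1)) < j then Λ (w 0) (w j) else 0)
          = Λ (w 0) (∑ i : Fin c, w i.succ) := by
        rw [map_sum, Fin.sum_univ_succ]
        simp [Fin.succ_pos]
      rw [h0]
      have h1 : ∀ i : Fin c, ∑ j : Fin (c+1), (if i.succ < j then Λ (w i.succ) (w j) else 0)
          = ∑ j : Fin c, (if i < j then Λ (w i.succ) (w j.succ) else 0) := by
        intro i
        rw [Fin.sum_univ_succ]
        simp [Fin.succ_lt_succ_iff, Fin.not_lt_zero]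
      simp only [h1]
      ring
    · congr 1
      rw [Fin.sum_univ_succ]

/-- `Σ_{i<j} (e_i - e_j) = Σ_i e_i (c - 1 - 2i)`. -/
lemma double_sum_lt {c : ℕ} (e : Fin c → ℤ) :
    (∑ i : Fin c, ∑ j : Fin c, if i < j then e i - e j else 0)
      = ∑ i : Fin c, e i * ((c : ℤ) - 1 - 2 * (i : ℕ)) := by
  have h1 : (∑ i : Fin c, ∑ j : Fin c, if i < j then e i - e j else 0)
      = (∑ i : Fin c, ∑ j : Fin c, if i < j then e i else 0)
        - (∑ i : Fin c, ∑ j : Fin c, if i < j then e j else 0) := by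
    rw [← Finset.sum_sub_distrib]
    congr 1; funext i
    rw [← Finset.sum_sub_distrib]
    congr 1; funext j
    split <;> simp
  rw [h1, Finset.sum_comm (f := fun i j => if i < j then e j else 0)]
  have h2 : ∀ i : Fin c, (∑ j : Fin c, if i < j then e i else 0) = (c - 1 - (i:ℕ) : ℕ) * e i := by
    intro i
    rw [Finset.sum_ite, Finset.sum_const, Finset.sum_const_zero, add_zero,
      Finset.filter_lt_eq_Ioi, Fin.card_Ioi]
    simp [nsmul_eq_mul]
  have h3 : ∀ j : Fin c, (∑ i : Fin c, if i < j then e j else 0) = ((j:ℕ) : ℤ) * e j := by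
    intro j
    rw [Finset.sum_ite, Finset.sum_const, Finset.sum_const_zero, add_zero,
      Finset.filter_gt_eq_Iio, Fin.card_Iio]
    simp [nsmul_eq_mul]
  simp only [h2, h3]
  rw [← Finset.sum_sub_distrib]
  congr 1; funext i
  have hi : (i : ℕ) < c := i.isLt
  have : ((c - 1 - (i:ℕ) : ℕ) : ℤ) = (c : ℤ) - 1 - (i : ℕ) := by omega
  rw [this]; ring

theorem stmt0    {m : ℕ} (hm : 1 ≤ m) {R : Type*} [Ring R]
    (t : Rˣ) (ht : ∀ r : R, (t : R) * r = r * (t : R))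
    (Λ : (Fin m → ℤ) →ₗ[ℤ] (Fin m → ℤ) →ₗ[ℤ] ℤ)
    (hΛskew : ∀ g h, Λ g h = -Λ h g)
    (X : (Fin m → ℤ) → Rˣ)
    (hX0 : X 0 = 1)
    (hXmul : ∀ g h, X g * X h = t ^ (Λ g h) * X (g + h))
    (k : Fin m) (b : Fin m → ℤ) (hbkk : b k = 0)
    (hcompat : ∀ j, Λ (stdE j) b = if j = k then 1 else 0)
    (X' : Fin m → Rˣ)
    (hX'ne : ∀ i, i ≠ k → X' i = X (stdE i))
    (hX'k : (X' k : R) = (X (-stdE k + bPlus b) : R) + (X (-stdE k + bMinus b) : R))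
    (Lam' : Fin m → Fin m → ℤ)
    (hLam'skew : ∀ i j, Lam' i j = -Lam' j i)
    (hLam'nk : ∀ i j, i ≠ k → j ≠ k → Lam' i j = Λ (stdE i) (stdE j))
    (hLam'k : ∀ i, i ≠ k → Lam' i k = Λ (stdE i) (-stdE k + bPlus b))
    (c : ℕ) (hc : 0 < c) :
    nval c (fun _ => false) = 0
    ∧ (∀ (l : Fin c) (lam lam' : Fin c → Bool),
        (∀ j, j ≠ l → lam j = lam' j) → lam l = true → lam' l = false →
        nval c lam - nval c lam' = (c : ℤ) - 2 * (((l : ℕ) : ℤ) + 1) + 1)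
    ∧ ((X' k ^ c : Rˣ) : R) =
        ∑ lam : Fin c → Bool,
          ((t ^ nval c lam : Rˣ) : R) *
            ((X ((-(c : ℤ)) • stdE k
                + (∑ i, if lam i then (1 : ℤ) else 0) • bPlus b
                + ((c : ℤ) - ∑ i, if lam i then (1 : ℤ) else 0) • bMinus b) : Rˣ) : R) := by
  refine ⟨by simp [nval], ?_, ?_⟩
  · intro l lam lam' hne hl hl'
    unfold nval
    rw [← Finset.sum_sub_distrib, Finset.sum_eq_single l]
    · simp [hl, hl']
    · intro j _ hj; rw [hne j hj]; ring
    · simp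
  · -- main expansion
    set u : Fin m → ℤ := -stdE k + bPlus b with hu
    set v : Fin m → ℤ := -stdE k + bMinus b with hv
    have hΛgb : ∀ g : Fin m → ℤ, Λ g b = g k := by
      intro g
      have hg : g = ∑ i, g i • stdE i := by
        funext j
        simp [stdE, Pi.single_apply]
      conv_lhs => rw [hg]
      rw [map_sum, LinearMap.sum_apply]
      simp only [map_smul, LinearMap.smul_apply, hcompat, smul_eq_mul]
      simp
    have hb : bPlus b - bMinus b = b := by
      funext j; simp only [bPlus, bMinus, Pi.sub_apply]; omega
    have hself : ∀ g, Λ g g = 0 := by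
      intro g; have := hΛskew g g; omega
    have h2 : Λ (bPlus b) (bMinus b) = 0 := by
      have h1 : Λ (bPlus b) b = 0 := by rw [hΛgb]; simp [bPlus, hbkk]
      have h1' : Λ (bPlus b) (bPlus b) - Λ (bPlus b) (bMinus b) = 0 := by
        rw [← map_sub, hb]; exact h1
      have := hself (bPlus b); omega
    have h4 : Λ (stdE k) (bPlus b) - Λ (stdE k) (bMinus b) = 1 := by
      have h3 : Λ (stdE k) b = 1 := by simpa using hcompat k
      have h3' : Λ (stdE k) (bPlus b) - Λ (stdE k) (bMinus b) = Λ (stdE k) b := by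
        rw [← map_sub, hb]
      omega
    have hΛuv : Λ u v = 1 := by
      rw [hu, hv]
      simp only [map_add, map_neg, LinearMap.add_apply, LinearMap.neg_apply]
      have h5 := hΛskew (bPlus b) (stdE k)
      have h6 := hself (stdE k)
      omega
    have hΛvu : Λ v u = -1 := by rw [hΛskew v u, hΛuv]
    have hΛuu : Λ u u = 0 := hself u
    have hΛvv : Λ v v = 0 := hself v
    have hcomm : ∀ (g : Fin m → ℤ) (z : ℤ), Commute (t ^ z) (X g) := by
      intro g z
      have hc0 : Commute t (X g) := Units.ext (by simpa using ht (X g))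
      exact hc0.zpow_left z
    have hXpow : ((X' k ^ c : Rˣ) : R) = (((X u : Rˣ) : R) + ((X v : Rˣ) : R)) ^ c := by
      rw [Units.val_pow_eq_pow_val, hX'k]
    rw [hXpow, add_pow_words]
    refine Finset.sum_congr rfl (fun lam _ => ?_)
    set w : Fin c → (Fin m → ℤ) := fun i => if lam i then u else v with hw
    have hterm : (fun i : Fin c => if lam i then ((X u : Rˣ) : R) else ((X v : Rˣ) : R))
        = fun i => ((X (w i) : Rˣ) : R) := by
      funext i; rw [hw]; by_cases h : lam i <;> simp [h]
    rw [hterm]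
    have hcoe : ((List.finRange c).map (fun i => ((X (w i) : Rˣ) : R))).prod
        = ((((List.finRange c).map (fun i => X (w i))).prod : Rˣ) : R) := by
      simpa [List.map_map, Function.comp_def] using
        (map_list_prod (Units.coeHom R) ((List.finRange c).map fun i => X (w i))).symm
    rw [hcoe, listProdX t Λ X hX0 hXmul hcomm c w, Units.val_mul]
    have hE : (∑ i : Fin c, ∑ j : Fin c, if i < j then Λ (w i) (w j) else 0) = nval c lam := by
      have he : ∀ i j : Fin c, Λ (w i) (w j)
          = (if lam i then (1:ℤ) else 0) - (if lam j then (1:ℤ) else 0) := by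
        intro i j
        rw [hw]
        by_cases hi : lam i <;> by_cases hj : lam j <;>
          simp [hi, hj, hΛuv, hΛvu, hΛuu, hΛvv]
      calc (∑ i : Fin c, ∑ j : Fin c, if i < j then Λ (w i) (w j) else 0)
          = ∑ i : Fin c, ∑ j : Fin c,
              if i < j then (if lam i then (1:ℤ) else 0) - (if lam j then (1:ℤ) else 0) else 0 := by
            simp only [he]
        _ = ∑ i : Fin c, (if lam i then (1:ℤ) else 0) * ((c : ℤ) - 1 - 2 * (i : ℕ)) :=
            double_sum_lt _
        _ = nval c lam := by
            unfold nval
            refine Finset.sum_congr rfl (fun i _ => ?_)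
            by_cases h : lam i <;> simp [h] <;> ring
    have hS : (∑ i : Fin c, w i)
        = (-(c : ℤ)) • stdE k + (∑ i, if lam i then (1 : ℤ) else 0) • bPlus b
          + ((c : ℤ) - ∑ i, if lam i then (1 : ℤ) else 0) • bMinus b := by
      funext j
      have hwj : ∀ i : Fin c, w i j
          = -stdE k j + (if lam i then (1:ℤ) else 0) * bPlus b j
            + (1 - (if lam i then (1:ℤ) else 0)) * bMinus b j := by
        intro i
        rw [hw]
        by_cases h : lam i <;> simp [h, hu, hv] <;> ring
      rw [Finset.sum_apply]
      rw [Finset.sum_congr rfl (fun i _ => hwj i)]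
      rw [Finset.sum_add_distrib, Finset.sum_add_distrib, ← Finset.sum_mul, ← Finset.sum_mul,
        Finset.sum_const, Finset.card_univ, Fintype.card_fin, Finset.sum_sub_distrib,
        Finset.sum_const, Finset.card_univ, Fintype.card_fin]
      simp only [Pi.add_apply, Pi.smul_apply, smul_eq_mul, nsmul_eq_mul, Pi.neg_apply]
      push_cast
      ring
    rw [hE, hS]
end

section
/- Let d = (d_1,…,d_m) ∈ ℤ^m with d_k > 0. Then there exists a function v_d : {0,1}^{d_k} → ℤ such that (X')^d = Σ_{λ ∈ {0,1}^{d_k}} t^{v_d(λ)} · X(d − 2d_k·e_k + (Σ_i λ_i)·(b_k)_+ + (d_k − Σ_i λ_i)·(b_k)_−), with v_d(0,…,0) = 0 and v_d(λ) − v_d(λ') = d_k − 2l + 1 whenever λ, λ' ∈ {0,1}^{d_k} satisfy λ_j = λ'_j for all j ≠ l, λ_l = 1 and λ'_l = 0. -/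
namespace QTaux

variable {m : ℕ} {R : Type*} [Ring R] (t : Rˣ)
  (Λ : (Fin m → ℤ) →ₗ[ℤ] (Fin m → ℤ) →ₗ[ℤ] ℤ)
  (X : (Fin m → ℤ) → Rˣ)

def Gs (d : Fin m → ℤ) : List (Fin m) → (Fin m → ℤ)
  | [] => 0
  | a :: L => d a • stdE a + Gs d L

def Es (Λ : (Fin m → ℤ) →ₗ[ℤ] (Fin m → ℤ) →ₗ[ℤ] ℤ) (d : Fin m → ℤ) : List (Fin m) → ℤ
  | [] => 0
  | a :: L => Λ (d a • stdE a) (Gs d L) + Es Λ d L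

def cfun (n : ℕ) (lam : Fin n → Bool) : ℤ :=
  ∑ i : Fin n, if lam i then ((n : ℤ) - 1 - 2 * ((i : ℕ) : ℤ)) else 0

def sfun (n : ℕ) (lam : Fin n → Bool) : ℤ := ∑ i : Fin n, if lam i then (1 : ℤ) else 0

def Sv (up um : Fin m → ℤ) (n : ℕ) (lam : Fin n → Bool) : Fin m → ℤ :=
  ∑ i : Fin n, if lam i then up else um

theorem lam_smul_apply (z : ℤ) (g h : Fin m → ℤ) : Λ (z • g) h = z * Λ g h := by
  rw [map_smul, LinearMap.smul_apply, smul_eq_mul]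

section basic
variable (hΛskew : ∀ g h, Λ g h = -Λ h g)
  (hX0 : X 0 = 1) (hXmul : ∀ g h, X g * X h = t ^ (Λ g h) * X (g + h))

include hΛskew in
theorem lam_self (g : Fin m → ℤ) : Λ g g = 0 := by have := hΛskew g g; omega

include hΛskew hX0 hXmul

theorem X_mul_neg (g : Fin m → ℤ) : X g * X (-g) = 1 := by
  rw [hXmul, map_neg, lam_self Λ hΛskew, neg_zero, zpow_zero, add_neg_cancel, hX0, one_mul]

theorem X_inv (g : Fin m → ℤ) : (X g)⁻¹ = X (-g) :=
  inv_eq_of_mul_eq_one_right (X_mul_neg t Λ X hΛskew hX0 hXmul g)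

theorem X_zpow (g : Fin m → ℤ) (z : ℤ) : X g ^ z = X (z • g) := by
  induction z using Int.induction_on with
  | zero => simpa using hX0.symm
  | succ n ih =>
    rw [zpow_add_one, ih, hXmul, lam_smul_apply, lam_self Λ hΛskew, mul_zero, zpow_zero,
      one_mul, add_smul, one_smul]
  | pred n ih =>
    rw [sub_smul, one_smul, zpow_sub_one, ih, X_inv t Λ X hΛskew hX0 hXmul, hXmul, map_neg,
      lam_smul_apply, lam_self Λ hΛskew, mul_zero, neg_zero, zpow_zero, one_mul, sub_eq_add_neg]

end basic

section expand

theorem Sv_cons (up um : Fin m → ℤ) (n : ℕ) (ε : Bool) (lam : Fin n → Bool) :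
    Sv up um (n + 1) (Fin.cons ε lam) = (if ε then up else um) + Sv up um n lam := by
  unfold Sv
  rw [Fin.sum_univ_succ]
  simp only [Fin.cons_zero, Fin.cons_succ]

set_option linter.unnecessarySeqFocus false in
set_option linter.unusedTactic false in
theorem cfun_cons (n : ℕ) (ε : Bool) (lam : Fin n → Bool) :
    cfun (n + 1) (Fin.cons ε lam) =
      (if ε then (n : ℤ) - sfun n lam else -(sfun n lam)) + cfun n lam := by
  unfold cfun sfun
  rw [Fin.sum_univ_succ]
  simp only [Fin.cons_zero, Fin.cons_succ]
  have h : ∀ i : Fin n,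
      (if lam i then ((n + 1 : ℕ) : ℤ) - 1 - 2 * (((i.succ : Fin (n+1)) : ℕ) : ℤ) else 0) =
      (if lam i then ((n : ℤ) - 1 - 2 * ((i : ℕ) : ℤ)) else 0) -
        (if lam i then (1 : ℤ) else 0) := by
    intro i
    by_cases h : lam i <;> simp [h, Fin.val_succ] <;> push_cast <;> ring
  rw [Finset.sum_congr rfl (fun i _ => h i), Finset.sum_sub_distrib]
  cases ε <;> simp <;> push_cast <;> ring

variable (up um : Fin m → ℤ)
  (hpp : Λ up up = 0) (hpm : Λ up um = 1) (hmp : Λ um up = -1) (hmm : Λ um um = 0)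

include hpp hpm hmp hmm in
theorem lam_w_S (n : ℕ) (ε : Bool) (lam : Fin n → Bool) :
    Λ (if ε then up else um) (Sv up um n lam) =
      if ε then (n : ℤ) - sfun n lam else -(sfun n lam) := by
  unfold Sv
  rw [map_sum]
  have h : ∀ i : Fin n, Λ (if ε then up else um) (if lam i then up else um) =
      (if ε then (1 : ℤ) else 0) - (if lam i then (1 : ℤ) else 0) := by
    intro i
    cases ε <;> by_cases h : lam i <;> simp [h, hpp, hpm, hmp, hmm]
  rw [Finset.sum_congr rfl (fun i _ => h i), Finset.sum_sub_distrib]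
  cases ε <;> simp [sfun]

variable (ht : ∀ r : R, (t : R) * r = r * (t : R))
  (hX0 : X 0 = 1) (hXmul : ∀ g h, X g * X h = t ^ (Λ g h) * X (g + h))

include ht hXmul in
theorem key_mul (w : Fin m → ℤ) (c : ℤ) (S : Fin m → ℤ) :
    ((X w : Rˣ) : R) * (((t ^ c : Rˣ) : R) * ((X S : Rˣ) : R)) =
      ((t ^ (c + Λ w S) : Rˣ) : R) * ((X (w + S) : Rˣ) : R) := by
  have h : Commute t (X w) := Units.ext (ht (X w))
  calc ((X w : Rˣ) : R) * (((t ^ c : Rˣ) : R) * ((X S : Rˣ) : R))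
      = ((X w * (t ^ c * X S) : Rˣ) : R) := by rw [Units.val_mul, Units.val_mul]
    _ = ((t ^ (c + Λ w S) * X (w + S) : Rˣ) : R) := by
        rw [← mul_assoc, ← (h.zpow_left c).eq, mul_assoc, hXmul, ← mul_assoc, ← zpow_add]
    _ = _ := by rw [Units.val_mul]

include hpp hpm hmp hmm ht hX0 hXmul in
theorem expand (n : ℕ) :
    (((X up : Rˣ) : R) + ((X um : Rˣ) : R)) ^ n =
      ∑ lam : Fin n → Bool,
        ((t ^ cfun n lam : Rˣ) : R) * ((X (Sv up um n lam) : Rˣ) : R) := by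
  induction n with
  | zero =>
    have : ∀ lam : Fin 0 → Bool, Sv up um 0 lam = 0 := fun lam => rfl
    simp [cfun, Sv, hX0]
  | succ n ih =>
    rw [pow_succ', ih, add_mul, Finset.mul_sum, Finset.mul_sum]
    rw [← Fintype.sum_equiv (Fin.consEquiv fun _ => Bool)
      (fun p => ((t ^ cfun (n+1) (Fin.cons p.1 p.2) : Rˣ) : R) *
        ((X (Sv up um (n+1) (Fin.cons p.1 p.2)) : Rˣ) : R))
      (fun lam => ((t ^ cfun (n+1) lam : Rˣ) : R) * ((X (Sv up um (n+1) lam) : Rˣ) : R))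
      (fun p => rfl)]
    rw [Fintype.sum_prod_type, Fintype.sum_bool]
    congr 1 <;>
    · apply Finset.sum_congr rfl
      intro lam _
      rw [key_mul t Λ X ht hXmul, cfun_cons, Sv_cons]
      have hw := lam_w_S Λ up um hpp hpm hmp hmm n
      first
        | rw [show Λ up (Sv up um n lam) = (n : ℤ) - sfun n lam by simpa using hw true lam]
        | rw [show Λ um (Sv up um n lam) = -(sfun n lam) by simpa using hw false lam]
      simp [add_comm]

include ht hXmul in
theorem pair_mul (a c : ℤ) (g h : Fin m → ℤ) :
    (t ^ a * X g) * (t ^ c * X h) = t ^ (a + c + Λ g h) * X (g + h) := by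
  have hc : Commute t (X g) := Units.ext (ht (X g))
  calc (t ^ a * X g) * (t ^ c * X h)
      = t ^ a * ((X g * t ^ c) * X h) := by rw [mul_assoc, mul_assoc]
    _ = t ^ a * ((t ^ c * X g) * X h) := by rw [← (hc.zpow_left c).eq]
    _ = (t ^ a * t ^ c) * (X g * X h) := by rw [mul_assoc (t ^ c), ← mul_assoc]
    _ = t ^ (a + c) * (t ^ (Λ g h) * X (g + h)) := by rw [← zpow_add, hXmul]
    _ = t ^ (a + c + Λ g h) * X (g + h) := by rw [← mul_assoc, ← zpow_add]

include ht hXmul in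
theorem tri_mul (a c e : ℤ) (g1 g2 g3 : Fin m → ℤ) :
    (t ^ a * X g1) * ((t ^ c * X g2) * (t ^ e * X g3)) =
      t ^ (a + (c + e + Λ g2 g3) + Λ g1 (g2 + g3)) * X (g1 + (g2 + g3)) := by
  rw [pair_mul t Λ X ht hXmul c e g2 g3, pair_mul t Λ X ht hXmul]

end expand

section lists

theorem lam_Gs_right (d : Fin m → ℤ) (y : Fin m → ℤ) :
    ∀ L : List (Fin m), Λ y (Gs d L) = (L.map fun i => d i * Λ y (stdE i)).sum
  | [] => by simp [Gs]
  | a :: L => by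
    simp only [Gs, map_add, List.map_cons, List.sum_cons, map_smul, smul_eq_mul]
    rw [lam_Gs_right d y L]

theorem lam_Gs_left (d : Fin m → ℤ) (y : Fin m → ℤ) :
    ∀ L : List (Fin m), Λ (Gs d L) y = (L.map fun i => d i * Λ (stdE i) y).sum
  | [] => by simp [Gs]
  | a :: L => by
    simp only [Gs, map_add, List.map_cons, List.sum_cons, LinearMap.add_apply,
      lam_smul_apply]
    rw [lam_Gs_left d y L]

theorem lam_Gs_right_fin (d : Fin m → ℤ) (y : Fin m → ℤ) (L : List (Fin m)) (hL : L.Nodup) :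
    Λ y (Gs d L) = ∑ i ∈ L.toFinset, d i * Λ y (stdE i) := by
  rw [lam_Gs_right, List.sum_toFinset _ hL]

theorem lam_Gs_left_fin (d : Fin m → ℤ) (y : Fin m → ℤ) (L : List (Fin m)) (hL : L.Nodup) :
    Λ (Gs d L) y = ∑ i ∈ L.toFinset, d i * Λ (stdE i) y := by
  rw [lam_Gs_left, List.sum_toFinset _ hL]

theorem Gs_eq_sum (d : Fin m → ℤ) : ∀ L : List (Fin m),
    Gs d L = (L.map fun i => d i • stdE i).sum
  | [] => by simp [Gs]
  | a :: L => by
    simp only [Gs, List.map_cons, List.sum_cons]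
    rw [Gs_eq_sum d L]

theorem Gs_append (d : Fin m → ℤ) : ∀ L1 L2 : List (Fin m),
    Gs d (L1 ++ L2) = Gs d L1 + Gs d L2
  | [], L2 => by simp [Gs]
  | a :: L1, L2 => by
    show d a • stdE a + Gs d (L1 ++ L2) = d a • stdE a + Gs d L1 + Gs d L2
    rw [Gs_append d L1 L2, add_assoc]

theorem Es_eq (d : Fin m → ℤ) :
    ∀ L : List (Fin m), L.Pairwise (· < ·) →
      Es Λ d L = ∑ i ∈ L.toFinset, ∑ j ∈ L.toFinset,
        (if i < j then d i * d j * Λ (stdE i) (stdE j) else 0)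
  | [], _ => by simp [Es]
  | a :: L, hp => by
    have ha : ∀ x ∈ L, a < x := fun x hx => (List.pairwise_cons.1 hp).1 x hx
    have hL : L.Pairwise (· < ·) := (List.pairwise_cons.1 hp).2
    have hnd : L.Nodup := hL.imp ne_of_lt
    have hna : a ∉ L.toFinset := by
      simp only [List.mem_toFinset]
      intro hmem
      exact absurd rfl (ne_of_lt (ha a hmem))
    rw [List.toFinset_cons, Finset.sum_insert hna]
    have inner : ∀ i : Fin m, ∑ j ∈ insert a L.toFinset,
        (if i < j then d i * d j * Λ (stdE i) (stdE j) else 0) =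
        (if i < a then d i * d a * Λ (stdE i) (stdE a) else 0) +
        ∑ j ∈ L.toFinset, (if i < j then d i * d j * Λ (stdE i) (stdE j) else 0) :=
      fun i => Finset.sum_insert hna
    rw [inner a, Finset.sum_congr rfl (fun i _ => inner i)]
    rw [if_neg (lt_irrefl a)]
    have hzero : ∀ i ∈ L.toFinset,
        (if i < a then d i * d a * Λ (stdE i) (stdE a) else 0) = 0 := by
      intro i hi
      rw [if_neg (asymm (ha i (List.mem_toFinset.1 hi)))]
    rw [Finset.sum_add_distrib, Finset.sum_congr rfl hzero, Finset.sum_const_zero]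
    have hfirst : ∑ j ∈ L.toFinset, (if a < j then d a * d j * Λ (stdE a) (stdE j) else 0) =
        Λ (d a • stdE a) (Gs d L) := by
      rw [lam_smul_apply, lam_Gs_right_fin Λ d _ L hnd, Finset.mul_sum]
      apply Finset.sum_congr rfl
      intro j hj
      rw [if_pos (ha j (List.mem_toFinset.1 hj))]
      ring
    rw [hfirst, ← Es_eq d L hL, Es]
    ring

variable (hΛskew : ∀ g h, Λ g h = -Λ h g)
  (hX0 : X 0 = 1) (hXmul : ∀ g h, X g * X h = t ^ (Λ g h) * X (g + h))
  (ht : ∀ r : R, (t : R) * r = r * (t : R))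
  (X' : Fin m → Rˣ) (k : Fin m) (hX'ne : ∀ i, i ≠ k → X' i = X (stdE i))
  (d : Fin m → ℤ)

set_option linter.unusedSectionVars false in
include hΛskew hX0 hXmul ht hX'ne in
theorem prodL : ∀ L : List (Fin m), (∀ i ∈ L, i ≠ k) →
    (L.map fun i => X' i ^ d i).prod = t ^ Es Λ d L * X (Gs d L)
  | [], _ => by simp [Es, Gs, hX0]
  | a :: L, h => by
    have hcomm : Commute t (X (d a • stdE a)) := Units.ext (ht _)
    rw [List.map_cons, List.prod_cons, prodL L (fun i hi => h i (List.mem_cons_of_mem a hi)),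
      hX'ne a (h a List.mem_cons_self), X_zpow t Λ X hΛskew hX0 hXmul, ← mul_assoc,
      ← (hcomm.zpow_left (Es Λ d L)).eq, mul_assoc, hXmul, ← mul_assoc, ← zpow_add]
    show _ = t ^ Es Λ d (a :: L) * X (Gs d (a :: L))
    rw [Es, Gs, add_comm (Es Λ d L)]

end lists
end QTaux

open QTaux in
theorem stmt1    {m : ℕ} (hm : 1 ≤ m) {R : Type*} [Ring R]
    (t : Rˣ) (ht : ∀ r : R, (t : R) * r = r * (t : R))
    (Λ : (Fin m → ℤ) →ₗ[ℤ] (Fin m → ℤ) →ₗ[ℤ] ℤ)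
    (hΛskew : ∀ g h, Λ g h = -Λ h g)
    (X : (Fin m → ℤ) → Rˣ)
    (hX0 : X 0 = 1)
    (hXmul : ∀ g h, X g * X h = t ^ (Λ g h) * X (g + h))
    (k : Fin m) (b : Fin m → ℤ) (hbkk : b k = 0)
    (hcompat : ∀ j, Λ (stdE j) b = if j = k then 1 else 0)
    (X' : Fin m → Rˣ)
    (hX'ne : ∀ i, i ≠ k → X' i = X (stdE i))
    (hX'k : (X' k : R) = (X (-stdE k + bPlus b) : R) + (X (-stdE k + bMinus b) : R))
    (Lam' : Fin m → Fin m → ℤ)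
    (hLam'skew : ∀ i j, Lam' i j = -Lam' j i)
    (hLam'nk : ∀ i j, i ≠ k → j ≠ k → Lam' i j = Λ (stdE i) (stdE j))
    (hLam'k : ∀ i, i ≠ k → Lam' i k = Λ (stdE i) (-stdE k + bPlus b))
    (d : Fin m → ℤ) (hdk : 0 < d k) :
    ∃ v : (Fin (d k).toNat → Bool) → ℤ,
      (((XpPow t Lam' X' d : Rˣ) : R) =
        ∑ lam : Fin (d k).toNat → Bool,
          ((t ^ v lam : Rˣ) : R) *
            ((X (d - (2 * d k) • stdE k
                + (∑ i, if lam i then (1 : ℤ) else 0) • bPlus b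
                + (d k - ∑ i, if lam i then (1 : ℤ) else 0) • bMinus b) : Rˣ) : R))
      ∧ v (fun _ => false) = 0
      ∧ (∀ (l : Fin (d k).toNat) (lam lam' : Fin (d k).toNat → Bool),
          (∀ j, j ≠ l → lam j = lam' j) → lam l = true → lam' l = false →
          v lam - v lam' = d k - 2 * (((l : ℕ) : ℤ) + 1) + 1) := by
  classical
  set n := (d k).toNat with hn_def
  have hn : ((n : ℕ) : ℤ) = d k := Int.toNat_of_nonneg hdk.le
  refine ⟨cfun n, ?_, ?_, ?_⟩
  · -- main identity
    -- abbreviations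
    set up := -stdE k + bPlus b with hup
    set um := -stdE k + bMinus b with hum
    have hb : bPlus b - bMinus b = b := by
      funext j; simp only [bPlus, bMinus, Pi.sub_apply]; omega
    have hupm : up - um = b := by
      funext j
      simp only [hup, hum, Pi.sub_apply, Pi.add_apply, Pi.neg_apply, bPlus, bMinus]
      omega
    have hum_eq : um = up - b := by rw [← hupm]; abel
    -- basis expansion lemmas
    have vec_expand : ∀ u : Fin m → ℤ, u = ∑ j, u j • stdE j := by
      intro u
      funext x
      rw [Finset.sum_apply]
      have : ∀ j : Fin m, (u j • stdE j) x = if x = j then u j else 0 := by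
        intro j
        simp [stdE, Pi.single_apply, mul_ite]
      rw [Finset.sum_congr rfl fun j _ => this j, Finset.sum_ite_eq]
      simp
    have lam_left : ∀ u y : Fin m → ℤ, Λ u y = ∑ j, u j * Λ (stdE j) y := by
      intro u y
      conv_lhs => rw [vec_expand u]
      rw [map_sum, LinearMap.sum_apply]
      exact Finset.sum_congr rfl fun j _ => lam_smul_apply Λ (u j) (stdE j) y
    -- the four pair values
    have hbplusb : Λ (bPlus b) b = 0 := by
      rw [lam_left]
      rw [Finset.sum_congr rfl fun j _ => by rw [hcompat j]]
      simp only [mul_ite, mul_one, mul_zero]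
      rw [Finset.sum_ite_eq' Finset.univ k (fun j => bPlus b j)]
      simp [bPlus, hbkk]
    have hupb : Λ up b = -1 + Λ (bPlus b) b := by
      rw [hup, map_add, LinearMap.add_apply, map_neg, LinearMap.neg_apply, hcompat k, if_pos rfl]
    have hpp : Λ up up = 0 := lam_self Λ hΛskew up
    have hmm : Λ um um = 0 := lam_self Λ hΛskew um
    have hpm : Λ up um = 1 := by
      rw [hum_eq, map_sub, hpp, hupb, hbplusb]
      ring
    have hmp : Λ um up = -1 := by rw [hΛskew, hpm]
    -- list decomposition of finRange
    have hkm : (k : ℕ) < m := k.isLt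
    set lt := (List.finRange m).take k.val with hlt_def
    set gt := (List.finRange m).drop (k.val + 1) with hgt_def
    have hsplit : List.finRange m = lt ++ k :: gt := by
      conv_lhs => rw [← List.take_append_drop k.val (List.finRange m)]
      rw [hlt_def, hgt_def]
      congr 1
      rw [List.drop_eq_getElem_cons (by simpa using hkm)]
      congr 1
      apply Fin.ext
      simp [List.getElem_finRange]
    have hlt_mem : ∀ i ∈ lt, i < k := by
      intro i hi
      obtain ⟨j, hj, hje⟩ := List.mem_iff_getElem.1 hi
      have hjlen : j < k.val := by
        simp only [hlt_def, List.length_take, List.length_finRange] at hj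
        omega
      have hval : (i : ℕ) = j := by
        rw [← hje]
        simp [hlt_def, List.getElem_take, List.getElem_finRange]
      rw [Fin.lt_def]
      omega
    have hgt_mem : ∀ i ∈ gt, k < i := by
      intro i hi
      obtain ⟨j, hj, hje⟩ := List.mem_iff_getElem.1 hi
      have hjlen : k.val + 1 + j < m := by
        simp only [hgt_def, List.length_drop, List.length_finRange] at hj
        omega
      have hval : (i : ℕ) = k.val + 1 + j := by
        rw [← hje]
        simp [hgt_def, List.getElem_drop, List.getElem_finRange]
      rw [Fin.lt_def]
      omega
    have hlt_ne : ∀ i ∈ lt, i ≠ k := fun i hi => ne_of_lt (hlt_mem i hi)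
    have hgt_ne : ∀ i ∈ gt, i ≠ k := fun i hi => ne_of_gt (hgt_mem i hi)
    have hlt_sorted : lt.Pairwise (· < ·) :=
      (List.pairwise_lt_finRange m).sublist (List.take_sublist _ _)
    have hgt_sorted : gt.Pairwise (· < ·) :=
      (List.pairwise_lt_finRange m).sublist (List.drop_sublist _ _)
    have hlt_nd : lt.Nodup := hlt_sorted.imp ne_of_lt
    have hgt_nd : gt.Nodup := hgt_sorted.imp ne_of_lt
    set T₁ := lt.toFinset with hT₁
    set T₂ := gt.toFinset with hT₂
    have hmem₁ : ∀ i ∈ T₁, i < k := fun i hi => hlt_mem i (List.mem_toFinset.1 hi)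
    have hmem₂ : ∀ i ∈ T₂, k < i := fun i hi => hgt_mem i (List.mem_toFinset.1 hi)
    have hknot2 : k ∉ T₂ := fun h => absurd rfl (ne_of_gt (hmem₂ k h))
    have hdisj : Disjoint T₁ (insert k T₂) := by
      rw [Finset.disjoint_left]
      intro x hx hx'
      rcases Finset.mem_insert.1 hx' with h | h
      · exact absurd rfl (ne_of_lt (h ▸ hmem₁ x hx))
      · exact absurd (lt_trans (hmem₁ x hx) (hmem₂ x h)) (lt_irrefl x)
    have huniv : (Finset.univ : Finset (Fin m)) = T₁ ∪ insert k T₂ := by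
      have h1 := congrArg List.toFinset hsplit
      rw [List.toFinset_finRange, List.toFinset_append, List.toFinset_cons] at h1
      exact h1
    -- Gs facts
    set G1 := Gs d lt with hG1
    set G2 := Gs d gt with hG2
    have hGd : G1 + (d k • stdE k + G2) = d := by
      have h2 : Gs d (List.finRange m) = d := by
        rw [Gs_eq_sum, ← Fin.sum_univ_def]
        exact (vec_expand d).symm
      rw [hsplit, Gs_append] at h2
      rw [hG1, hG2]
      exact h2
    have hG1b : Λ G1 b = 0 := by
      rw [hG1, lam_Gs_left_fin Λ d b lt hlt_nd]
      apply Finset.sum_eq_zero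
      intro i hi
      rw [hcompat i, if_neg (hlt_ne i (List.mem_toFinset.1 hi)), mul_zero]
    have hG2b : Λ G2 b = 0 := by
      rw [hG2, lam_Gs_left_fin Λ d b gt hgt_nd]
      apply Finset.sum_eq_zero
      intro i hi
      rw [hcompat i, if_neg (hgt_ne i (List.mem_toFinset.1 hi)), mul_zero]
    -- Sv structure
    have hSv : ∀ lam : Fin n → Bool, Sv up um n lam = (n : ℤ) • um + sfun n lam • b := by
      intro lam
      unfold Sv sfun
      have hterm : ∀ i : Fin n, (if lam i then up else um)
          = um + (if lam i then (1 : ℤ) else 0) • b := by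
        intro i
        by_cases h : lam i
        · simp only [h, if_pos, one_smul]
          rw [← hupm]; abel
        · simp [h]
      rw [Finset.sum_congr rfl fun i _ => hterm i, Finset.sum_add_distrib,
        Finset.sum_const, ← Finset.sum_smul]
      congr 1
      rw [Finset.card_univ, Fintype.card_fin, natCast_zsmul]
    have hLamGSv : ∀ (G : Fin m → ℤ), Λ G b = 0 →
        ∀ lam : Fin n → Bool, Λ G (Sv up um n lam) = (n : ℤ) * Λ G up := by
      intro G hGb lam
      rw [hSv lam, map_add, map_smul, map_smul, smul_eq_mul, smul_eq_mul, hGb, mul_zero,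
        add_zero, hum_eq, map_sub, hGb, sub_zero]
    -- the key exponent identity
    have keyP : (∑ i : Fin m, ∑ j : Fin m, if i < j then d i * d j * Lam' i j else 0) =
        Es Λ d lt + Es Λ d gt + Λ G1 G2 + d k * Λ G1 up - d k * Λ G2 up := by
      rw [huniv]
      simp only [Finset.sum_union hdisj, Finset.sum_insert hknot2]
      simp only [Finset.sum_add_distrib]
      have hA11 : (∑ i ∈ T₁, ∑ j ∈ T₁, if i < j then d i * d j * Lam' i j else 0)
          = Es Λ d lt := by
        rw [Es_eq Λ d lt hlt_sorted]
        apply Finset.sum_congr rfl; intro i hi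
        apply Finset.sum_congr rfl; intro j hj
        by_cases h : i < j
        · rw [if_pos h, if_pos h,
            hLam'nk i j (hlt_ne i (List.mem_toFinset.1 hi)) (hlt_ne j (List.mem_toFinset.1 hj))]
        · rw [if_neg h, if_neg h]
      have hA1k : (∑ i ∈ T₁, if i < k then d i * d k * Lam' i k else 0)
          = d k * Λ G1 up := by
        rw [hG1, lam_Gs_left_fin Λ d up lt hlt_nd, Finset.mul_sum]
        apply Finset.sum_congr rfl; intro i hi
        rw [if_pos (hmem₁ i hi), hLam'k i (hlt_ne i (List.mem_toFinset.1 hi))]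
        ring
      have hA12 : (∑ i ∈ T₁, ∑ j ∈ T₂, if i < j then d i * d j * Lam' i j else 0)
          = Λ G1 G2 := by
        rw [hG1, lam_Gs_left_fin Λ d G2 lt hlt_nd]
        apply Finset.sum_congr rfl; intro i hi
        rw [hG2, lam_Gs_right_fin Λ d (stdE i) gt hgt_nd, Finset.mul_sum]
        apply Finset.sum_congr rfl; intro j hj
        rw [if_pos (lt_trans (hmem₁ i hi) (hmem₂ j hj)),
          hLam'nk i j (hlt_ne i (List.mem_toFinset.1 hi)) (hgt_ne j (List.mem_toFinset.1 hj))]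
        ring
      have hAk1 : (∑ j ∈ T₁, if k < j then d k * d j * Lam' k j else 0) = 0 := by
        apply Finset.sum_eq_zero; intro j hj
        rw [if_neg (asymm (hmem₁ j hj))]
      have hAkk : (if k < k then d k * d k * Lam' k k else 0) = 0 := by
        rw [if_neg (lt_irrefl k)]
      have hAk2 : (∑ j ∈ T₂, if k < j then d k * d j * Lam' k j else 0)
          = -(d k * Λ G2 up) := by
        rw [hG2, lam_Gs_left_fin Λ d up gt hgt_nd, Finset.mul_sum, ← Finset.sum_neg_distrib]
        apply Finset.sum_congr rfl; intro j hj
        rw [if_pos (hmem₂ j hj), hLam'skew k j, hLam'k j (hgt_ne j (List.mem_toFinset.1 hj))]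
        ring
      have hA21 : (∑ i ∈ T₂, ∑ j ∈ T₁, if i < j then d i * d j * Lam' i j else 0) = 0 := by
        apply Finset.sum_eq_zero; intro i hi
        apply Finset.sum_eq_zero; intro j hj
        rw [if_neg (asymm (lt_trans (hmem₁ j hj) (hmem₂ i hi)))]
      have hA2k : (∑ i ∈ T₂, if i < k then d i * d k * Lam' i k else 0) = 0 := by
        apply Finset.sum_eq_zero; intro i hi
        rw [if_neg (asymm (hmem₂ i hi))]
      have hA22 : (∑ i ∈ T₂, ∑ j ∈ T₂, if i < j then d i * d j * Lam' i j else 0)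
          = Es Λ d gt := by
        rw [Es_eq Λ d gt hgt_sorted]
        apply Finset.sum_congr rfl; intro i hi
        apply Finset.sum_congr rfl; intro j hj
        by_cases h : i < j
        · rw [if_pos h, if_pos h,
            hLam'nk i j (hgt_ne i (List.mem_toFinset.1 hi)) (hgt_ne j (List.mem_toFinset.1 hj))]
        · rw [if_neg h, if_neg h]
      linarith [hA11, hA1k, hA12, hAk1, hAkk, hAk2, hA21, hA2k, hA22]
    -- exponent per lambda
    set P := ∑ i : Fin m, ∑ j : Fin m, if i < j then d i * d j * Lam' i j else 0 with hP
    have hexp : ∀ lam : Fin n → Bool,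
        -P + (Es Λ d lt + (cfun n lam + Es Λ d gt + Λ (Sv up um n lam) G2)
          + Λ G1 (Sv up um n lam + G2)) = cfun n lam := by
      intro lam
      have h1 : Λ G1 (Sv up um n lam + G2) = Λ G1 (Sv up um n lam) + Λ G1 G2 := map_add _ _ _
      have h2 : Λ G1 (Sv up um n lam) = (n : ℤ) * Λ G1 up := hLamGSv G1 hG1b lam
      have h3 : Λ (Sv up um n lam) G2 = -((n : ℤ) * Λ G2 up) := by
        rw [hΛskew, hLamGSv G2 hG2b lam]
      rw [h1, h2, h3, keyP, ← hn]
      ring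
    -- vector identity per lambda
    have hvec : ∀ lam : Fin n → Bool, G1 + (Sv up um n lam + G2) =
        d - (2 * d k) • stdE k + sfun n lam • bPlus b
          + (d k - sfun n lam) • bMinus b := by
      intro lam
      funext x
      have h1 := congrFun (hSv lam) x
      have h2 := congrFun hGd x
      have h3 := congrFun hum x
      have h4 := congrFun hb x
      simp only [Pi.add_apply, Pi.sub_apply, Pi.neg_apply, Pi.smul_apply,
        smul_eq_mul] at h1 h2 h3 h4 ⊢
      linear_combination h1 + h2 + ((n : ℕ) : ℤ) * h3 - sfun n lam * h4
        + (bMinus b x - stdE k x) * hn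
    -- expansion of the middle factor
    have hXkval : ((X' k ^ d k : Rˣ) : R) =
        ∑ lam : Fin n → Bool,
          ((t ^ cfun n lam : Rˣ) : R) * ((X (Sv up um n lam) : Rˣ) : R) := by
      have h1 : X' k ^ d k = X' k ^ n := by rw [← hn, zpow_natCast]
      rw [h1, Units.val_pow_eq_pow_val, hX'k]
      exact expand t Λ X up um hpp hpm hmp hmm ht hX0 hXmul n
    -- main computation
    have hprod1 := prodL t Λ X hΛskew hX0 hXmul ht X' k hX'ne d lt hlt_ne
    have hprod2 := prodL t Λ X hΛskew hX0 hXmul ht X' k hX'ne d gt hgt_ne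
    show ((XpPow t Lam' X' d : Rˣ) : R) = _
    rw [XpPow, hsplit, List.map_append, List.map_cons, List.prod_append, List.prod_cons,
      hprod1, hprod2, ← hP]
    simp only [Units.val_mul]
    rw [hXkval, Finset.sum_mul, Finset.mul_sum, Finset.mul_sum]
    apply Finset.sum_congr rfl
    intro lam _
    have hunit : (t ^ (-P) * ((t ^ Es Λ d lt * X G1) *
        ((t ^ cfun n lam * X (Sv up um n lam)) * (t ^ Es Λ d gt * X G2))) : Rˣ) =
        t ^ cfun n lam * X (d - (2 * d k) • stdE k + sfun n lam • bPlus b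
          + (d k - sfun n lam) • bMinus b) := by
      rw [tri_mul t Λ X ht hXmul, ← mul_assoc, ← zpow_add, hexp lam, hvec lam]
    calc ((t ^ (-P) : Rˣ) : R) * ((((t ^ Es Λ d lt : Rˣ) : R) * ((X G1 : Rˣ) : R)) *
          ((((t ^ cfun n lam : Rˣ) : R) * ((X (Sv up um n lam) : Rˣ) : R)) *
            (((t ^ Es Λ d gt : Rˣ) : R) * ((X G2 : Rˣ) : R))))
        = ((t ^ (-P) * ((t ^ Es Λ d lt * X G1) *
            ((t ^ cfun n lam * X (Sv up um n lam)) * (t ^ Es Λ d gt * X G2))) : Rˣ) : R) := by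
          simp only [Units.val_mul]
      _ = _ := by
          rw [hunit, Units.val_mul]
          simp only [sfun]
  · simp [cfun]
  · intro l lam lam' hij h1 h0
    unfold cfun
    rw [← Finset.sum_sub_distrib]
    rw [Finset.sum_eq_single l]
    · rw [h1, h0, if_pos rfl, if_neg (by simp)]
      omega
    · intro i _ hne
      rw [hij i hne]
      by_cases h : lam' i <;> simp [h]
    · intro h
      exact absurd (Finset.mem_univ l) h
end

section
/- Let d = (d_1,…,d_m) ∈ ℤ^m with d_k > 0. Then there exists a function v'_d : {0,1}^{d_k} → ℤ such that X(d) = Σ_{λ ∈ {0,1}^{d_k}} t^{v'_d(λ)} · (X')^{d − 2d_k·e_k + (Σ_i λ_i)·(b_k)_+ + (d_k − Σ_i λ_i)·(b_k)_−}, with v'_d(0,…,0) = 0 and v'_d(λ) − v'_d(λ') = d_k − 2l + 1 whenever λ, λ' ∈ {0,1}^{d_k} satisfy λ_j = λ'_j for all j ≠ l, λ_l = 1 and λ'_l = 0. -/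
section Helpers
variable {m : ℕ} {R : Type*} [Ring R] (t : Rˣ)
variable (Λ : (Fin m → ℤ) →ₗ[ℤ] (Fin m → ℤ) →ₗ[ℤ] ℤ)
variable (X : (Fin m → ℤ) → Rˣ)

lemma hUcomm (ht : ∀ r : R, (t : R) * r = r * (t : R)) : ∀ u : Rˣ, t * u = u * t := by
  intro u
  ext
  exact ht u

lemma hGG (hΛskew : ∀ g h, Λ g h = -Λ h g) : ∀ g, Λ g g = 0 := by
  intro g
  have := hΛskew g g
  omega

lemma hXzpow (hΛskew : ∀ g h, Λ g h = -Λ h g) (hX0 : X 0 = 1)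
    (hXmul : ∀ g h, X g * X h = t ^ (Λ g h) * X (g + h)) :
    ∀ (g : Fin m → ℤ) (c : ℤ), X g ^ c = X (c • g) := by
  intro g c
  have hnat : ∀ nn : ℕ, X g ^ nn = X ((nn : ℤ) • g) := by
    intro nn
    induction nn with
    | zero => simpa using hX0.symm
    | succ nn ih =>
      rw [pow_succ, ih, hXmul]
      rw [show Λ ((nn:ℤ) • g) g = (nn:ℤ) * Λ g g from by
          rw [LinearMap.map_smul₂]; simp, hGG Λ hΛskew,
        mul_zero, zpow_zero, one_mul]
      congr 1
      push_cast
      module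
  have hinv : ∀ h : Fin m → ℤ, (X h)⁻¹ = X (-h) := by
    intro h
    have : X h * X (-h) = 1 := by
      rw [hXmul, show Λ h (-h) = -Λ h h by simp, hGG Λ hΛskew]
      simp [hX0]
    exact inv_eq_of_mul_eq_one_right this
  rcases le_or_gt 0 c with hc0 | hc0
  · obtain ⟨nn, rfl⟩ := Int.eq_ofNat_of_zero_le hc0
    rw [zpow_natCast, hnat]
  · obtain ⟨nn, rfl⟩ : ∃ nn : ℕ, c = -(nn:ℤ) := ⟨c.natAbs, by omega⟩
    rw [zpow_neg, zpow_natCast, hnat, hinv]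
    congr 1
    module

lemma hXswap (hΛskew : ∀ g h, Λ g h = -Λ h g)
    (hXmul : ∀ g h, X g * X h = t ^ (Λ g h) * X (g + h)) :
    ∀ g h, X g * X h = t ^ (2 * Λ g h) * (X h * X g) := by
  intro g h
  rw [hXmul, hXmul, ← mul_assoc, ← zpow_add, hΛskew h g, add_comm h g]
  congr 2
  ring

lemma hLamb (k : Fin m) (b : Fin m → ℤ)
    (hcompat : ∀ j, Λ (stdE j) b = if j = k then 1 else 0) :
    ∀ g : Fin m → ℤ, Λ g b = g k := by
  intro g
  have hg : g = ∑ i : Fin m, g i • stdE i := by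
    funext j
    rw [Finset.sum_apply]
    simp [stdE, Pi.single_apply]
  conv_lhs => rw [hg]
  rw [map_sum]
  simp only [map_smul, LinearMap.sum_apply, LinearMap.smul_apply, smul_eq_mul, hcompat]
  rw [Finset.sum_eq_single k]
  · simp
  · intro i _ hik
    simp [hik]
  · simp

end Helpers

def Dsum {α : Type*} (g : α → α → ℤ) : List α → ℤ
  | [] => 0
  | x :: L => (L.map (g x)).sum + Dsum g L

lemma Dsum_eq_sum {α : Type*} [DecidableEq α] [LinearOrder α] (g : α → α → ℤ) :
    ∀ L : List α, L.Pairwise (· < ·) →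
      Dsum g L = ∑ i ∈ L.toFinset, ∑ j ∈ L.toFinset, if i < j then g i j else 0 := by
  intro L
  induction L with
  | nil => simp [Dsum]
  | cons x L ih =>
    intro hp
    rw [List.pairwise_cons] at hp
    obtain ⟨hx, hL⟩ := hp
    have hnodup : L.Nodup := hL.imp (fun h => ne_of_lt h)
    have hxT : x ∉ L.toFinset := by
      simp only [List.mem_toFinset]
      intro hmem
      exact lt_irrefl x (hx x hmem)
    have hsum : (L.map (g x)).sum = ∑ j ∈ L.toFinset, g x j := by
      rw [List.sum_toFinset _ hnodup]
    rw [Dsum, ih hL, List.toFinset_cons, Finset.sum_insert hxT]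
    have h1 : ∑ j ∈ insert x L.toFinset, (if x < j then g x j else 0)
        = ∑ j ∈ L.toFinset, g x j := by
      rw [Finset.sum_insert hxT, if_neg (lt_irrefl x), zero_add]
      apply Finset.sum_congr rfl
      intro j hj
      rw [if_pos (hx j (List.mem_toFinset.mp hj))]
    have h2 : ∀ i ∈ L.toFinset, ∑ j ∈ insert x L.toFinset, (if i < j then g i j else 0)
        = ∑ j ∈ L.toFinset, (if i < j then g i j else 0) := by
      intro i hi
      rw [Finset.sum_insert hxT, if_neg (not_lt_of_gt (hx i (List.mem_toFinset.mp hi))), zero_add]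
    rw [h1, Finset.sum_congr rfl h2, hsum]

lemma add_pow_boolsum {R : Type*} [Ring R] (x y : R) :
    ∀ n : ℕ, (x + y) ^ n =
      ∑ lam : Fin n → Bool, (((List.finRange n).map (fun i => if lam i then x else y)).prod) := by
  intro n
  induction n with
  | zero => simp
  | succ n ih =>
    have e : ∀ lam : Fin (n+1) → Bool,
        ((List.finRange (n+1)).map (fun i => if lam i then x else y)).prod
        = (if lam 0 then x else y) *
          ((List.finRange n).map (fun i => if lam i.succ then x else y)).prod := by
      intro lam
      rw [List.finRange_succ, List.map_cons, List.prod_cons, List.map_map]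
      rfl
    calc (x + y) ^ (n+1) = (x + y) * (x + y) ^ n := by rw [pow_succ']
      _ = ∑ lam : Fin n → Bool,
            (x * ((List.finRange n).map (fun i => if lam i then x else y)).prod)
          + ∑ lam : Fin n → Bool,
            (y * ((List.finRange n).map (fun i => if lam i then x else y)).prod) := by
          rw [ih, add_mul, Finset.mul_sum, Finset.mul_sum]
      _ = ∑ p : Bool × (Fin n → Bool),
            ((if p.1 then x else y) *
              ((List.finRange n).map (fun i => if p.2 i then x else y)).prod) := by
          rw [Fintype.sum_prod_type, Fintype.sum_bool]; simp
      _ = ∑ lam : Fin (n+1) → Bool,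
            ((if lam 0 then x else y) *
              ((List.finRange n).map (fun i => if lam i.succ then x else y)).prod) := by
          apply Fintype.sum_equiv (Fin.consEquiv (fun _ : Fin (n+1) => Bool))
          intro p
          simp [Fin.consEquiv]
      _ = _ := (Finset.sum_congr rfl (fun lam _ => (e lam).symm))

lemma comm_zpow {G : Type*} [Group G] (t u x : G) (hc : ∀ g, t * g = g * t)
    (α : ℤ) (h : x * u = t ^ α * (u * x)) : ∀ c : ℤ, x * u ^ c = t ^ (c * α) * (u ^ c * x) := by
  have hct : ∀ (c : ℤ) (g : G), t ^ c * g = g * t ^ c := by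
    intro c g
    exact (Commute.zpow_left (hc g) c).eq
  have hnat : ∀ nn : ℕ, x * u ^ nn = t ^ ((nn : ℤ) * α) * (u ^ nn * x) := by
    intro nn
    induction nn with
    | zero => simp
    | succ nn ih =>
      have e0 : x * u ^ (nn+1) = (x * u ^ nn) * u := by rw [pow_succ, mul_assoc]
      rw [e0, ih, mul_assoc, mul_assoc, h, ← mul_assoc (u ^ nn), ← hct α (u ^ nn),
        mul_assoc (t ^ α), ← mul_assoc (t ^ ((nn:ℤ)*α)), ← zpow_add, ← mul_assoc (u ^ nn),
        ← pow_succ]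
      congr 2
      push_cast; ring
  intro c
  rcases le_or_gt 0 c with hc0 | hc0
  · obtain ⟨nn, rfl⟩ := Int.eq_ofNat_of_zero_le hc0
    rw [zpow_natCast]
    exact hnat nn
  · obtain ⟨nn, rfl⟩ : ∃ nn : ℕ, c = -(nn:ℤ) := ⟨c.natAbs, by omega⟩
    have h2 : u ^ (-(nn:ℤ)) = (u ^ nn)⁻¹ := by rw [zpow_neg, zpow_natCast]
    rw [h2]
    have e1 : (u ^ nn)⁻¹ * x = t ^ ((nn:ℤ)*α) * (x * (u ^ nn)⁻¹) := by
      have base : (u ^ nn)⁻¹ * (x * u ^ nn) * (u ^ nn)⁻¹ = (u ^ nn)⁻¹ * x := by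
        group
      rw [hnat nn] at base
      rw [← base, ← mul_assoc ((u ^ nn)⁻¹), (hct ((nn:ℤ)*α) ((u ^ nn)⁻¹)).symm]
      rw [mul_assoc, mul_assoc]
      congr 1
      group
    rw [e1, ← mul_assoc, ← zpow_add]
    rw [show -(nn:ℤ) * α + (nn:ℤ) * α = 0 by ring, zpow_zero, one_mul]

section WordProd
variable {m : ℕ} {R : Type*} [Ring R] (t : Rˣ)
variable (Λ : (Fin m → ℤ) →ₗ[ℤ] (Fin m → ℤ) →ₗ[ℤ] ℤ)
variable (X : (Fin m → ℤ) → Rˣ)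

lemma word_prod (ht : ∀ u : Rˣ, t * u = u * t)
    (hX0 : X 0 = 1)
    (hXmul : ∀ g h, X g * X h = t ^ (Λ g h) * X (g + h))
    (p q : Fin m → ℤ)
    (hpair : ∀ ε ε' : Bool, Λ (if ε then p else q) (if ε' then p else q) =
      (if ε then (1:ℤ) else 0) - (if ε' then (1:ℤ) else 0)) :
    ∀ (N : ℕ) (lam : Fin N → Bool),
      (((List.finRange N).map (fun i => X (if lam i then p else q))).prod : Rˣ)
      = t ^ (∑ i : Fin N, if lam i then ((N:ℤ) - 1 - 2*((i:ℕ):ℤ)) else 0) *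
          X (∑ i : Fin N, (if lam i then p else q)) := by
  have htz : ∀ (c : ℤ) (u : Rˣ), u * t ^ c = t ^ c * u := by
    intro c u
    exact ((Commute.zpow_left (ht u) c).eq).symm
  intro N
  induction N with
  | zero =>
    intro lam
    simp only [List.finRange_zero, List.map_nil, List.prod_nil, Finset.univ_eq_empty,
      Finset.sum_empty, zpow_zero, one_mul]
    exact hX0.symm
  | succ N ih =>
    intro lam
    have hlam' := ih (fun i => lam i.succ)
    rw [List.finRange_succ, List.map_cons, List.prod_cons, List.map_map]
    have hmapeq : ((List.finRange N).map ((fun i => X (if lam i then p else q)) ∘ Fin.succ))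
        = ((List.finRange N).map (fun i => X (if lam i.succ then p else q))) := rfl
    rw [hmapeq, hlam']
    rw [← mul_assoc, htz, mul_assoc, hXmul]
    rw [← mul_assoc, ← zpow_add]
    -- now match exponents and vectors
    have hvec : (if lam 0 then p else q) + ∑ i : Fin N, (if lam i.succ then p else q)
        = ∑ i : Fin (N+1), (if lam i then p else q) := by
      rw [Fin.sum_univ_succ]
    have hLam : Λ (if lam 0 then p else q) (∑ i : Fin N, (if lam i.succ then p else q))
        = ∑ i : Fin N, ((if lam 0 then (1:ℤ) else 0) - (if lam i.succ then (1:ℤ) else 0)) := by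
      rw [map_sum]
      exact Finset.sum_congr rfl (fun i _ => hpair (lam 0) (lam i.succ))
    have hexp : (∑ i : Fin N, if lam i.succ then ((N:ℤ) - 1 - 2*((i:ℕ):ℤ)) else 0)
        + Λ (if lam 0 then p else q) (∑ i : Fin N, (if lam i.succ then p else q))
        = ∑ i : Fin (N+1), if lam i then (((N+1:ℕ):ℤ) - 1 - 2*((i:ℕ):ℤ)) else 0 := by
      rw [hLam, Finset.sum_sub_distrib,
        Fin.sum_univ_succ (f := fun i : Fin (N+1) => if lam i then (((N+1:ℕ):ℤ) - 1 - 2*((i:ℕ):ℤ)) else 0)]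
      have h2 : (∑ _x : Fin N, if lam 0 = true then (1:ℤ) else 0)
          = if lam 0 = true then ((N:ℕ):ℤ) else 0 := by
        by_cases h : lam 0 <;> simp [h]
      have h3 : ∀ i : Fin N, (if lam i.succ then (((N+1:ℕ):ℤ) - 1 - 2*(((i.succ : Fin (N+1)):ℕ):ℤ)) else 0)
          = (if lam i.succ then ((N:ℤ) - 1 - 2*((i:ℕ):ℤ)) else 0) - (if lam i.succ then (1:ℤ) else 0) := by
        intro i
        by_cases h : lam i.succ
        · simp only [h, if_true, Fin.val_succ]
          push_cast
          ring
        · simp [h]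
      rw [Finset.sum_congr rfl (fun i _ => h3 i), Finset.sum_sub_distrib, h2]
      have h4 : (if lam 0 then (((N+1:ℕ):ℤ) - 1 - 2*(((0 : Fin (N+1)):ℕ):ℤ)) else 0)
          = if lam 0 then ((N:ℕ):ℤ) else 0 := by
        by_cases h : lam 0
        · simp only [h, if_true, Fin.val_zero]
          push_cast
          ring
        · simp [h]
      rw [h4]
      ring
    rw [hvec, hexp]
end WordProd

section Straighten
variable {m : ℕ} {R : Type*} [Ring R] (t : Rˣ)
variable (Λ : (Fin m → ℤ) →ₗ[ℤ] (Fin m → ℤ) →ₗ[ℤ] ℤ)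
variable (X : (Fin m → ℤ) → Rˣ) (X' : Fin m → Rˣ) (k : Fin m) (p : Fin m → ℤ)
variable (Lam' : Fin m → Fin m → ℤ)

lemma Lam_listsum_right (h : Fin m → ℤ) (v : Fin m → (Fin m → ℤ)) :
    ∀ L : List (Fin m), Λ h ((L.map v).sum) = (L.map (fun i => Λ h (v i))).sum := by
  intro L
  induction L with
  | nil => simp
  | cons x L ih => simp [map_add, ih]

lemma Lam_listsum_left (h : Fin m → ℤ) (v : Fin m → (Fin m → ℤ)) :
    ∀ L : List (Fin m), Λ ((L.map v).sum) h = (L.map (fun i => Λ (v i) h)).sum := by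
  intro L
  induction L with
  | nil => simp
  | cons x L ih => simp [map_add, ih]

lemma straighten
    (ht : ∀ u : Rˣ, t * u = u * t)
    (hX0 : X 0 = 1)
    (hzp : ∀ (g : Fin m → ℤ) (c : ℤ), X g ^ c = X (c • g))
    (hXmul : ∀ g h, X g * X h = t ^ (Λ g h) * X (g + h))
    (hcommk : ∀ (g : Fin m → ℤ), g k = 0 → ∀ c : ℤ,
      X g * X' k ^ c = t ^ (c * (2 * Λ g p)) * (X' k ^ c * X g))
    (hX'ne : ∀ i, i ≠ k → X' i = X (stdE i))
    (hL1 : ∀ i j, i ≠ k → j ≠ k → Lam' i j = Λ (stdE i) (stdE j))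
    (hL2 : ∀ i, i ≠ k → Lam' i k = Λ (stdE i) p)
    (hL3 : ∀ i, i ≠ k → Lam' k i = -Λ (stdE i) p)
    (a : Fin m → ℤ) :
    ∀ L : List (Fin m), L.Pairwise (· < ·) →
      ((L.map (fun i => X' i ^ a i)).prod : Rˣ)
      = t ^ (Dsum (fun i j => a i * a j * Lam' i j) L
             + a k * (if k ∈ L then
                 Λ ((L.map (fun i => if i = k then 0 else a i • stdE i)).sum) p else 0)) *
          ((if k ∈ L then X' k ^ (a k) else 1) *
            X ((L.map (fun i => if i = k then 0 else a i • stdE i)).sum)) := by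
  have htz : ∀ (c : ℤ) (u : Rˣ), u * t ^ c = t ^ c * u := by
    intro c u
    exact ((Commute.zpow_left (ht u) c).eq).symm
  have hsmulk : ∀ j : Fin m, j ≠ k → (a j • stdE j) k = 0 := by
    intro j hj
    simp [stdE, Pi.single_apply, Ne.symm hj]
  have hvp : ∀ j : Fin m, Λ (a j • stdE j) p = a j * Λ (stdE j) p := by
    intro j
    rw [LinearMap.map_smul₂]
    simp
  have move : ∀ (E c : ℤ) (g w : Fin m → ℤ), g k = 0 →
      X g * (t ^ E * (X' k ^ c * X w))
      = t ^ (E + c * (2 * Λ g p) + Λ g w) * (X' k ^ c * X (g + w)) := by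
    intro E c g w hg
    calc X g * (t ^ E * (X' k ^ c * X w))
        = t ^ E * (X g * X' k ^ c * X w) := by rw [← mul_assoc, htz]; group
      _ = t ^ E * (t ^ (c * (2 * Λ g p)) * (X' k ^ c * X g) * X w) := by
          rw [hcommk g hg c]
      _ = t ^ E * (t ^ (c * (2 * Λ g p)) * (X' k ^ c * (X g * X w))) := by group
      _ = t ^ E * (t ^ (c * (2 * Λ g p)) * (X' k ^ c * (t ^ (Λ g w) * X (g + w)))) := by
          rw [hXmul]
      _ = t ^ E * (t ^ (c * (2 * Λ g p)) * (t ^ (Λ g w) * (X' k ^ c * X (g + w)))) := by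
          rw [← mul_assoc (X' k ^ c), htz (Λ g w), mul_assoc]
      _ = t ^ (E + c * (2 * Λ g p) + Λ g w) * (X' k ^ c * X (g + w)) := by
          rw [zpow_add, zpow_add]
          group
  have move0 : ∀ (E : ℤ) (g w : Fin m → ℤ),
      X g * (t ^ E * (1 * X w)) = t ^ (E + Λ g w) * (1 * X (g + w)) := by
    intro E g w
    rw [one_mul, one_mul]
    calc X g * (t ^ E * X w)
        = t ^ E * (X g * X w) := by rw [← mul_assoc, htz]; group
      _ = t ^ E * (t ^ (Λ g w) * X (g + w)) := by rw [hXmul]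
      _ = t ^ (E + Λ g w) * X (g + w) := by rw [zpow_add]; group
  -- the sum helper
  have hgj : ∀ (j : Fin m), j ≠ k → ∀ L : List (Fin m), L.Nodup →
      (L.map (fun i => a j * a i * Lam' j i)).sum
      = (L.map (fun i => Λ (a j • stdE j) (if i = k then 0 else a i • stdE i))).sum
        + (if k ∈ L then a j * a k * Λ (stdE j) p else 0) := by
    intro j hj L
    induction L with
    | nil => simp
    | cons x L ih =>
      intro hnd
      rw [List.nodup_cons] at hnd
      obtain ⟨hx, hnd⟩ := hnd
      rw [List.map_cons, List.map_cons, List.sum_cons, List.sum_cons, ih hnd]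
      by_cases hxk : x = k
      · subst hxk
        rw [if_neg (fun h => hx h), if_pos (List.mem_cons_self (a := x) (l := L)), if_pos rfl]
        rw [hL2 j hj, map_zero]
        ring
      · have hmem : (if k ∈ x :: L then a j * a k * Λ (stdE j) p else 0)
            = (if k ∈ L then a j * a k * Λ (stdE j) p else 0) := by
          by_cases hh : k ∈ L
          · rw [if_pos hh, if_pos (List.mem_cons_of_mem x hh)]
          · rw [if_neg hh, if_neg (by simp [List.mem_cons, Ne.symm hxk, hh])]
        rw [hmem, if_neg hxk]
        have hterm : a j * a x * Lam' j x = Λ (a j • stdE j) (a x • stdE x) := by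
          rw [hL1 j x hj hxk, LinearMap.map_smul₂, map_smul]
          simp only [smul_eq_mul]
          ring
        rw [hterm]
        ring
  intro L
  induction L with
  | nil =>
    intro _
    simp [Dsum, hX0]
  | cons j L ih =>
    intro hp
    rw [List.pairwise_cons] at hp
    obtain ⟨hjlt, hpL⟩ := hp
    have hnd : L.Nodup := hpL.imp (fun h => ne_of_lt h)
    rw [List.map_cons, List.prod_cons, ih hpL]
    by_cases hjk : j = k
    · -- head is the special variable; `subst` eliminates k in favour of j or vice versa
      subst hjk
      have hkL : j ∉ L := fun h => lt_irrefl j (hjlt j h)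
      rw [if_neg hkL, if_neg hkL, if_pos (List.mem_cons_self (a := j) (l := L)), if_pos (List.mem_cons_self (a := j) (l := L))]
      rw [mul_zero, add_zero, one_mul]
      rw [List.map_cons, List.sum_cons, if_pos rfl, zero_add]
      rw [← mul_assoc, htz, mul_assoc]
      congr 2
      · -- exponent identity
        show Dsum (fun i j' => a i * a j' * Lam' i j') L
          = Dsum (fun i j' => a i * a j' * Lam' i j') (j :: L) + a j *
              Λ ((L.map (fun i => if i = j then 0 else a i • stdE i)).sum) p
        rw [show Dsum (fun i j' => a i * a j' * Lam' i j') (j :: L)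
            = (L.map (fun i => a j * a i * Lam' j i)).sum
              + Dsum (fun i j' => a i * a j' * Lam' i j') L from rfl]
        rw [Lam_listsum_left]
        have hmapc : (L.map (fun i => a j * a i * Lam' j i))
            = (L.map (fun i => -(a j) * (Λ (if i = j then 0 else a i • stdE i) p))) := by
          apply List.map_congr_left
          intro i hi
          have hij : i ≠ j := (hjlt i hi).ne'
          rw [if_neg hij, hL3 i hij, LinearMap.map_smul₂]
          simp only [smul_eq_mul]
          ring
        rw [hmapc, List.sum_map_mul_left]
        ring
    · -- ordinary head
      have hXj : X' j ^ a j = X (a j • stdE j) := by rw [hX'ne j hjk, hzp]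
      rw [hXj]
      rw [List.map_cons, List.sum_cons, if_neg hjk]
      by_cases hkL : k ∈ L
      · rw [if_pos hkL, if_pos hkL, if_pos (List.mem_cons_of_mem j hkL),
          if_pos (List.mem_cons_of_mem j hkL)]
        rw [move _ _ _ _ (hsmulk j hjk)]
        congr 2
        -- exponent identity
        rw [show Dsum (fun i j' => a i * a j' * Lam' i j') (j :: L)
            = (L.map (fun i => a j * a i * Lam' j i)).sum
              + Dsum (fun i j' => a i * a j' * Lam' i j') L from rfl]
        rw [hgj j hjk L hnd, if_pos hkL]
        rw [map_add, LinearMap.add_apply]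
        rw [← Lam_listsum_right Λ (a j • stdE j)
          (fun i => if i = k then 0 else a i • stdE i) L]
        rw [hvp j]
        ring
      · rw [if_neg hkL, if_neg hkL,
          if_neg (by simp [List.mem_cons, Ne.symm hjk, hkL]),
          if_neg (by simp [List.mem_cons, Ne.symm hjk, hkL])]
        rw [move0]
        congr 2
        rw [show Dsum (fun i j' => a i * a j' * Lam' i j') (j :: L)
            = (L.map (fun i => a j * a i * Lam' j i)).sum
              + Dsum (fun i j' => a i * a j' * Lam' i j') L from rfl]
        rw [hgj j hjk L hnd, if_neg hkL]
        rw [← Lam_listsum_right Λ (a j • stdE j)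
          (fun i => if i = k then 0 else a i • stdE i) L]
        ring
end Straighten

theorem stmt2    {m : ℕ} (hm : 1 ≤ m) {R : Type*} [Ring R]
    (t : Rˣ) (ht : ∀ r : R, (t : R) * r = r * (t : R))
    (Λ : (Fin m → ℤ) →ₗ[ℤ] (Fin m → ℤ) →ₗ[ℤ] ℤ)
    (hΛskew : ∀ g h, Λ g h = -Λ h g)
    (X : (Fin m → ℤ) → Rˣ)
    (hX0 : X 0 = 1)
    (hXmul : ∀ g h, X g * X h = t ^ (Λ g h) * X (g + h))
    (k : Fin m) (b : Fin m → ℤ) (hbkk : b k = 0)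
    (hcompat : ∀ j, Λ (stdE j) b = if j = k then 1 else 0)
    (X' : Fin m → Rˣ)
    (hX'ne : ∀ i, i ≠ k → X' i = X (stdE i))
    (hX'k : (X' k : R) = (X (-stdE k + bPlus b) : R) + (X (-stdE k + bMinus b) : R))
    (Lam' : Fin m → Fin m → ℤ)
    (hLam'skew : ∀ i j, Lam' i j = -Lam' j i)
    (hLam'nk : ∀ i j, i ≠ k → j ≠ k → Lam' i j = Λ (stdE i) (stdE j))
    (hLam'k : ∀ i, i ≠ k → Lam' i k = Λ (stdE i) (-stdE k + bPlus b))
    (d : Fin m → ℤ) (hdk : 0 < d k) :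
    ∃ v' : (Fin (d k).toNat → Bool) → ℤ,
      (((X d : Rˣ) : R) =
        ∑ lam : Fin (d k).toNat → Bool,
          ((t ^ v' lam : Rˣ) : R) *
            ((XpPow t Lam' X' (d - (2 * d k) • stdE k
                + (∑ i, if lam i then (1 : ℤ) else 0) • bPlus b
                + (d k - ∑ i, if lam i then (1 : ℤ) else 0) • bMinus b) : Rˣ) : R))
      ∧ v' (fun _ => false) = 0
      ∧ (∀ (l : Fin (d k).toNat) (lam lam' : Fin (d k).toNat → Bool),
          (∀ j, j ≠ l → lam j = lam' j) → lam l = true → lam' l = false →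
          v' lam - v' lam' = d k - 2 * (((l : ℕ) : ℤ) + 1) + 1) := by
  classical
  -- notation
  have hn : (((d k).toNat : ℤ)) = d k := Int.toNat_of_nonneg hdk.le
  set nN := (d k).toNat with hnN
  set p := -stdE k + bPlus b with hpdef
  set q := -stdE k + bMinus b with hqdef
  -- basic derived facts
  have htU : ∀ u : Rˣ, t * u = u * t := hUcomm t ht
  have htz : ∀ (c : ℤ) (u : Rˣ), u * t ^ c = t ^ c * u := by
    intro c u
    exact ((Commute.zpow_left (htU u) c).eq).symm
  have hgg : ∀ g, Λ g g = 0 := hGG Λ hΛskew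
  have hzp : ∀ (g : Fin m → ℤ) (c : ℤ), X g ^ c = X (c • g) := hXzpow t Λ X hΛskew hX0 hXmul
  have hswap : ∀ g h, X g * X h = t ^ (2 * Λ g h) * (X h * X g) := hXswap t Λ X hΛskew hXmul
  have hLb : ∀ g : Fin m → ℤ, Λ g b = g k := hLamb Λ k b hcompat
  have hBpk : bPlus b k = 0 := by simp [bPlus, hbkk]
  have hBmk : bMinus b k = 0 := by simp [bMinus, hbkk]
  have hBm : ∀ j, bMinus b j = bPlus b j - b j := by
    intro j
    simp only [bPlus, bMinus]
    omega
  have hqp : q = p - b := by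
    funext j
    simp only [hpdef, hqdef, Pi.add_apply, Pi.sub_apply, Pi.neg_apply]
    rw [hBm j]
    ring
  have hpk : p k = -1 := by
    simp [hpdef, stdE, hBpk]
  have hstdkk : stdE k k = (1:ℤ) := by simp [stdE]
  -- pairing values
  have hΛpq : Λ p q = 1 := by
    rw [hqp, map_sub, hgg, hLb p, hpk]
    ring
  have hpair : ∀ ε ε' : Bool, Λ (if ε then p else q) (if ε' then p else q) =
      (if ε then (1:ℤ) else 0) - (if ε' then (1:ℤ) else 0) := by
    intro ε ε'
    have hΛqp : Λ q p = -1 := by rw [hΛskew q p, hΛpq]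
    cases ε <;> cases ε' <;> simp [hgg, hΛpq, hΛqp]
  -- base commutation with X' k and its zpow version
  have hcommbase : ∀ g : Fin m → ℤ, g k = 0 → X g * X' k = t ^ (2 * Λ g p) * (X' k * X g) := by
    intro g hg
    have hΛgq : Λ g q = Λ g p := by
      rw [hqp, map_sub, hLb g, hg]
      ring
    ext
    push_cast [Units.val_mul]
    rw [hX'k]
    rw [mul_add, add_mul]
    have e1 : (X g : R) * (X p : R) = ((t ^ (2 * Λ g p) : Rˣ) : R) * ((X p : R) * (X g : R)) := by
      have := congrArg (Units.val) (hswap g p)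
      push_cast [Units.val_mul] at this
      rw [this]
    have e2 : (X g : R) * (X q : R) = ((t ^ (2 * Λ g p) : Rˣ) : R) * ((X q : R) * (X g : R)) := by
      have := congrArg (Units.val) (hswap g q)
      push_cast [Units.val_mul] at this
      rw [this, hΛgq]
    rw [e1, e2]
    noncomm_ring
  have hcommk : ∀ (g : Fin m → ℤ), g k = 0 → ∀ c : ℤ,
      X g * X' k ^ c = t ^ (c * (2 * Λ g p)) * (X' k ^ c * X g) := by
    intro g hg c
    exact comm_zpow t (X' k) (X g) htU (2 * Λ g p) (hcommbase g hg) c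
  -- word product
  have hword := word_prod t Λ X htU hX0 hXmul p q hpair
  -- the candidate exponent function
  refine ⟨fun lam => ∑ i : Fin nN, if lam i then ((nN:ℤ) - 1 - 2*((i:ℕ):ℤ)) else 0, ?_, ?_, ?_⟩
  · -- the main identity
    -- abbreviation-free statements of the vector facts
    have hs' : ∀ lam : Fin nN → Bool, (∑ i : Fin nN, if lam i then (0:ℤ) else 1)
        = (nN:ℤ) - (∑ i : Fin nN, if lam i then (1:ℤ) else 0) := by
      intro lam
      have h1 : ∀ i : Fin nN, (if lam i then (1:ℤ) else 0) + (if lam i then (0:ℤ) else 1) = 1 := by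
        intro i
        by_cases h : lam i <;> simp [h]
      have h2 : (∑ i : Fin nN, ((if lam i then (1:ℤ) else 0) + (if lam i then (0:ℤ) else 1)))
          = (nN:ℤ) := by
        rw [Finset.sum_congr rfl (fun i _ => h1 i)]
        simp [mul_comm]
      rw [Finset.sum_add_distrib] at h2
      linarith
    have hS1 : ∀ lam : Fin nN → Bool, (∑ i : Fin nN, if lam i then p else q)
        = (d - (2 * d k) • stdE k + (∑ i : Fin nN, if lam i then (1:ℤ) else 0) • bPlus b
            + (d k - ∑ i : Fin nN, if lam i then (1:ℤ) else 0) • bMinus b)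
          + (d k) • stdE k - d := by
      intro lam
      funext j
      rw [Finset.sum_apply]
      have hterm : ∀ i : Fin nN, (if lam i then p else q) j
          = -stdE k j + ((if lam i then (1:ℤ) else 0) * bPlus b j
              + (if lam i then (0:ℤ) else 1) * bMinus b j) := by
        intro i
        by_cases h : lam i <;> simp [h, hpdef, hqdef]
      rw [Finset.sum_congr rfl (fun i _ => hterm i), Finset.sum_add_distrib,
        Finset.sum_add_distrib, ← Finset.sum_mul, ← Finset.sum_mul, hs' lam]
      simp only [Finset.sum_const, Finset.card_univ, Fintype.card_fin, nsmul_eq_mul,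
        Pi.add_apply, Pi.sub_apply, Pi.smul_apply, smul_eq_mul]
      rw [hn]
      ring
    have hS2 : ∀ lam : Fin nN → Bool, (∑ i : Fin nN, if lam i then p else q)
        = (-(d k)) • stdE k + (d k) • bPlus b
          + ((∑ i : Fin nN, if lam i then (1:ℤ) else 0) - d k) • b := by
      intro lam
      rw [hS1 lam]
      funext j
      simp only [Pi.add_apply, Pi.sub_apply, Pi.smul_apply, Pi.neg_apply, smul_eq_mul]
      rw [hBm j]
      ring
    have hkey : ∀ lam : Fin nN → Bool,
        Λ (∑ i : Fin nN, if lam i then p else q) d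
          + d k * Λ (d + (∑ i : Fin nN, if lam i then p else q)) p = 0 := by
      intro lam
      rw [hS2 lam, hpdef]
      simp only [map_add, map_smul, map_neg, map_sub, LinearMap.add_apply,
        LinearMap.smul_apply, LinearMap.neg_apply, LinearMap.sub_apply, smul_eq_mul]
      rw [hgg (stdE k), hgg (bPlus b)]
      rw [hΛskew (stdE k) d, hΛskew (bPlus b) d, hΛskew b d,
        hΛskew (stdE k) (bPlus b), hΛskew b (stdE k), hΛskew b (bPlus b)]
      rw [hLb d, hLb (stdE k), hLb (bPlus b), hstdkk, hBpk]
      ring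
    have hak : ∀ lam : Fin nN → Bool,
        (d - (2 * d k) • stdE k + (∑ i : Fin nN, if lam i then (1:ℤ) else 0) • bPlus b
            + (d k - ∑ i : Fin nN, if lam i then (1:ℤ) else 0) • bMinus b) k = -(d k) := by
      intro lam
      simp only [Pi.add_apply, Pi.sub_apply, Pi.smul_apply, smul_eq_mul, hBpk, hBmk, hstdkk]
      ring
    have hwfull : ∀ lam : Fin nN → Bool,
        ((List.finRange m).map (fun i => if i = k then 0 else
          (d - (2 * d k) • stdE k + (∑ i : Fin nN, if lam i then (1:ℤ) else 0) • bPlus b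
            + (d k - ∑ i : Fin nN, if lam i then (1:ℤ) else 0) • bMinus b) i • stdE i)).sum
        = (∑ i : Fin nN, if lam i then p else q) + d := by
      intro lam
      rw [← Fin.sum_univ_def]
      funext j
      rw [Finset.sum_apply, Pi.add_apply]
      by_cases hj : j = k
      · rw [hj]
        have hz : ∀ i ∈ (Finset.univ : Finset (Fin m)),
            ((if i = k then 0 else (d - (2 * d k) • stdE k
              + (∑ i : Fin nN, if lam i then (1:ℤ) else 0) • bPlus b
              + (d k - ∑ i : Fin nN, if lam i then (1:ℤ) else 0) • bMinus b) i • stdE i)) k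
              = (0:ℤ) := by
          intro i _
          by_cases hik : i = k
          · simp [hik]
          · rw [if_neg hik]
            simp only [Pi.smul_apply, smul_eq_mul, stdE, Pi.single_apply]
            rw [if_neg (fun h => hik h.symm)]
            ring
        rw [Finset.sum_eq_zero hz]
        have h2 := congrFun (hS2 lam) k
        rw [h2]
        simp only [Pi.add_apply, Pi.sub_apply, Pi.smul_apply, Pi.neg_apply, smul_eq_mul,
          hstdkk, hBpk, hbkk]
        ring
      · rw [Finset.sum_eq_single j]
        · rw [if_neg hj]
          have h1 := congrFun (hS1 lam) j
          rw [h1]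
          simp only [Pi.add_apply, Pi.sub_apply, Pi.smul_apply, smul_eq_mul, stdE,
            Pi.single_apply, if_neg hj, if_pos rfl, if_true]
          ring
        · intro i _ hij
          by_cases hik : i = k
          · simp [hik]
          · simp only [if_neg hik, Pi.smul_apply, smul_eq_mul, stdE, Pi.single_apply]
            rw [if_neg (fun h => hij h.symm)]
            ring
        · intro h
          exact absurd (Finset.mem_univ j) h
    -- per-lambda unit identity
    have collapse : ∀ (c1 c2 c3 : ℤ) (Z : Rˣ),
        (X' k) ^ nN * (t ^ c1 * (t ^ c2 * (t ^ c3 * (X' k ^ (-(d k)) * Z))))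
        = t ^ (c1 + c2 + c3) * Z := by
      intro c1 c2 c3 Z
      rw [← mul_assoc (t ^ c2), ← zpow_add t c2 c3]
      rw [← mul_assoc (t ^ c1), ← zpow_add t c1 (c2 + c3)]
      rw [← mul_assoc ((X' k) ^ nN), htz (c1 + (c2 + c3)) ((X' k) ^ nN), mul_assoc]
      rw [show ((X' k) ^ nN : Rˣ) = X' k ^ ((nN : ℤ)) from (zpow_natCast (X' k) nN).symm]
      rw [← mul_assoc (X' k ^ ((nN:ℤ))), ← zpow_add (X' k) ((nN:ℤ)) (-(d k))]
      rw [show ((nN:ℤ)) + (-(d k)) = 0 by omega, zpow_zero, one_mul]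
      rw [show c1 + (c2 + c3) = c1 + c2 + c3 by ring]
    have hterm : ∀ lam : Fin nN → Bool,
        (X' k) ^ nN * (t ^ (∑ i : Fin nN, if lam i then ((nN:ℤ) - 1 - 2*((i:ℕ):ℤ)) else 0)
            * XpPow t Lam' X' (d - (2 * d k) • stdE k + (∑ i : Fin nN, if lam i then (1:ℤ) else 0) • bPlus b
            + (d k - ∑ i : Fin nN, if lam i then (1:ℤ) else 0) • bMinus b))
        = t ^ ((∑ i : Fin nN, if lam i then ((nN:ℤ) - 1 - 2*((i:ℕ):ℤ)) else 0)
              + Λ (∑ i : Fin nN, if lam i then p else q) d)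
            * X ((∑ i : Fin nN, if lam i then p else q) + d) := by
      intro lam
      have hstr := straighten t Λ X X' k p Lam' htU hX0 hzp hXmul hcommk hX'ne
        (fun i j hik hjk => hLam'nk i j hik hjk) (fun i hik => hLam'k i hik)
        (fun i hik => by rw [hLam'skew k i, hLam'k i hik])
        (d - (2 * d k) • stdE k + (∑ i : Fin nN, if lam i then (1:ℤ) else 0) • bPlus b
            + (d k - ∑ i : Fin nN, if lam i then (1:ℤ) else 0) • bMinus b) (List.finRange m) (List.pairwise_lt_finRange m)
      rw [if_pos (List.mem_finRange k), if_pos (List.mem_finRange k)] at hstr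
      rw [hwfull lam] at hstr
      rw [hak lam] at hstr
      have hD := Dsum_eq_sum (fun i j =>
          (d - (2 * d k) • stdE k + (∑ i : Fin nN, if lam i then (1:ℤ) else 0) • bPlus b
            + (d k - ∑ i : Fin nN, if lam i then (1:ℤ) else 0) • bMinus b) i
          * (d - (2 * d k) • stdE k + (∑ i : Fin nN, if lam i then (1:ℤ) else 0) • bPlus b
            + (d k - ∑ i : Fin nN, if lam i then (1:ℤ) else 0) • bMinus b) j * Lam' i j)
        (List.finRange m) (List.pairwise_lt_finRange m)
      rw [List.toFinset_finRange] at hD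
      unfold XpPow
      rw [hstr, ← hD]
      rw [collapse]
      congr 1
      congr 1
      rw [show (∑ i : Fin nN, if lam i then p else q) + d
          = d + (∑ i : Fin nN, if lam i then p else q) from add_comm _ _]
      linarith [hkey lam]
    -- expansion of the left-hand side
    have hLHS : (((X' k) : R)) ^ nN * ((X d : Rˣ) : R)
        = ∑ lam : Fin nN → Bool,
            (((t ^ ((∑ i : Fin nN, if lam i then ((nN:ℤ) - 1 - 2*((i:ℕ):ℤ)) else 0)
                + Λ (∑ i : Fin nN, if lam i then p else q) d)
              * X ((∑ i : Fin nN, if lam i then p else q) + d) : Rˣ)) : R) := by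
      rw [hX'k]
      rw [add_pow_boolsum ((X p : Rˣ) : R) ((X q : Rˣ) : R) nN, Finset.sum_mul]
      apply Finset.sum_congr rfl
      intro lam _
      have hmap : ((List.finRange nN).map (fun i => if lam i then ((X p : Rˣ):R) else ((X q : Rˣ):R)))
          = ((List.finRange nN).map (fun i => X (if lam i then p else q))).map (Units.coeHom R) := by
        rw [List.map_map]
        apply List.map_congr_left
        intro i _
        by_cases h : lam i <;> simp [h]
      rw [hmap, List.prod_hom _ (Units.coeHom R)]
      have hunit : ((List.finRange nN).map (fun i => X (if lam i then p else q))).prod * X d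
          = t ^ ((∑ i : Fin nN, if lam i then ((nN:ℤ) - 1 - 2*((i:ℕ):ℤ)) else 0)
                + Λ (∑ i : Fin nN, if lam i then p else q) d)
              * X ((∑ i : Fin nN, if lam i then p else q) + d) := by
        rw [hword nN lam, mul_assoc, hXmul, ← mul_assoc, ← zpow_add]
      calc (Units.coeHom R) (((List.finRange nN).map (fun i => X (if lam i then p else q))).prod)
            * ((X d : Rˣ) : R)
          = (((((List.finRange nN).map (fun i => X (if lam i then p else q))).prod * X d : Rˣ)) : R) := by
            rw [Units.val_mul]
            rfl
        _ = _ := by rw [hunit]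
    -- conclusion
    rw [← Units.mul_right_inj ((X' k) ^ nN), Finset.mul_sum]
    calc ((((X' k) ^ nN : Rˣ)) : R) * ((X d : Rˣ) : R)
        = (((X' k) : R)) ^ nN * ((X d : Rˣ) : R) := by rw [Units.val_pow_eq_pow_val]
      _ = _ := hLHS
      _ = ∑ lam : Fin nN → Bool, (((X' k) ^ nN : Rˣ) : R) *
            (((t ^ (∑ i : Fin nN, if lam i then ((nN:ℤ) - 1 - 2*((i:ℕ):ℤ)) else 0) : Rˣ) : R) *
              ((XpPow t Lam' X' (d - (2 * d k) • stdE k + (∑ i : Fin nN, if lam i then (1:ℤ) else 0) • bPlus b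
            + (d k - ∑ i : Fin nN, if lam i then (1:ℤ) else 0) • bMinus b) : Rˣ) : R)) := by
          apply Finset.sum_congr rfl
          intro lam _
          rw [← Units.val_mul, ← Units.val_mul, hterm lam]

  · simp
  · -- the difference property
    intro l lam lam' hagree hl hl'
    rw [← Finset.sum_sub_distrib]
    rw [Finset.sum_eq_single l]
    · rw [hl, hl', if_pos rfl, if_neg (by simp)]
      rw [hn]
      ring
    · intro i _ hi
      rw [hagree i hi]
      exact sub_self _
    · intro h
      exact absurd (Finset.mem_univ l) h
end

section
/- Let L ≥ 0 and a ≥ 0 be integers and suppose c := 2L − s > 0. Then there exists a function m_0 : {0,1}^c → ℤ such that X(ind + L·Be_{k−1} + (s − a)·Be_k) = Σ_{h ∈ {0,1}^c} t^{m_0(h)} · (X')^{ind' + L·B'e_{k−1} + (a + Σ_i h_i)·B'e_k}. -/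
section Aux
variable {R : Type*} [Ring R] (t : Rˣ)

lemma aux_tcomm (ht : ∀ r : R, (t : R) * r = r * (t : R)) (β : ℤ) (u : Rˣ) :
    t ^ β * u = u * t ^ β := by
  have h : Commute t u := Units.ext (by simpa using ht u)
  exact (h.zpow_left β).eq

lemma aux_tshift (ht : ∀ r : R, (t : R) * r = r * (t : R)) (β : ℤ) (u v : Rˣ) :
    u * (t ^ β * v) = t ^ β * (u * v) := by
  rw [← mul_assoc, ← aux_tcomm t ht β u, mul_assoc]

lemma aux_key (ht : ∀ r : R, (t : R) * r = r * (t : R)) (u v : Rˣ) (j : ℤ)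
    (hq : u * v = t ^ j * (v * u)) : ∀ n : ℤ, u ^ n * v = t ^ (j * n) * (v * u ^ n) := by
  have h2 : v * u⁻¹ = t ^ j * (u⁻¹ * v) := by
    calc v * u⁻¹ = u⁻¹ * (u * v) * u⁻¹ := by group
    _ = u⁻¹ * (t ^ j * (v * u)) * u⁻¹ := by rw [hq]
    _ = t ^ j * (u⁻¹ * (v * u)) * u⁻¹ := by rw [aux_tshift t ht]
    _ = t ^ j * (u⁻¹ * v) := by group
  have hq' : u⁻¹ * v = t ^ (-j) * (v * u⁻¹) := by
    rw [h2, ← mul_assoc, ← zpow_add, neg_add_cancel, zpow_zero, one_mul]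
  intro n
  induction n using Int.induction_on with
  | zero => simp
  | succ N ih =>
    calc u ^ ((N : ℤ) + 1) * v = u ^ (N : ℤ) * (u * v) := by
          rw [zpow_add_one, mul_assoc]
    _ = u ^ (N : ℤ) * (t ^ j * (v * u)) := by rw [hq]
    _ = t ^ j * (u ^ (N : ℤ) * v * u) := by rw [aux_tshift t ht, mul_assoc]
    _ = t ^ j * (t ^ (j * N) * (v * u ^ (N : ℤ)) * u) := by rw [ih]
    _ = t ^ (j * ((N : ℤ) + 1)) * (v * u ^ ((N : ℤ) + 1)) := by
          rw [mul_assoc, ← mul_assoc (t ^ j), ← zpow_add, mul_assoc, ← zpow_add_one]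
          congr 1
          ring
  | pred N ih =>
    calc u ^ (-(N : ℤ) - 1) * v = u ^ (-(N : ℤ)) * (u⁻¹ * v) := by
          rw [zpow_sub_one, mul_assoc]
    _ = u ^ (-(N : ℤ)) * (t ^ (-j) * (v * u⁻¹)) := by rw [hq']
    _ = t ^ (-j) * (u ^ (-(N : ℤ)) * v * u⁻¹) := by rw [aux_tshift t ht, mul_assoc]
    _ = t ^ (-j) * (t ^ (j * (-(N : ℤ))) * (v * u ^ (-(N : ℤ))) * u⁻¹) := by rw [ih]
    _ = t ^ (j * (-(N : ℤ) - 1)) * (v * u ^ (-(N : ℤ) - 1)) := by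
          rw [mul_assoc, ← mul_assoc (t ^ (-j)), ← zpow_add, mul_assoc, ← zpow_sub_one]
          congr 1
          ring

lemma aux_binom (y z : R) (C : ℕ) :
    (y + z) ^ C = ∑ h : Fin C → Bool,
      ((List.finRange C).map (fun i => if h i then y else z)).prod := by
  induction C with
  | zero =>
    rw [pow_zero]
    rw [Finset.sum_eq_single_of_mem (fun _ => true) (Finset.mem_univ _)]
    · simp
    · intro h _ hne
      exact absurd (Subsingleton.elim _ _) hne
  | succ C ih =>
    rw [pow_succ', ih]
    rw [← Fintype.sum_equiv (Fin.consEquiv (fun _ : Fin (C + 1) => Bool))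
      (fun p => ((List.finRange (C + 1)).map
        (fun i => if (Fin.consEquiv (fun _ => Bool)) p i then y else z)).prod)
      (fun h => ((List.finRange (C + 1)).map (fun i => if h i then y else z)).prod)
      (fun p => rfl)]
    rw [Fintype.sum_prod_type]
    rw [Fintype.sum_bool]
    have hsplit : ∀ (bb : Bool) (g : Fin C → Bool),
        ((List.finRange (C + 1)).map
          (fun i => if (Fin.consEquiv (fun _ => Bool)) (bb, g) i then y else z)).prod
        = (if bb then y else z) *
          ((List.finRange C).map (fun i => if g i then y else z)).prod := by
      intro bb g
      rw [List.finRange_succ, List.map_cons, List.map_map, List.prod_cons]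
      simp only [Fin.consEquiv, Equiv.coe_fn_mk]
      cases bb <;> simp [Function.comp_def, Fin.cons_succ, Fin.cons_zero]
    simp only [hsplit]
    rw [← Finset.mul_sum, ← Finset.mul_sum]
    simp [add_mul]

end Aux

theorem stmt3    {m : ℕ} (hm : 4 ≤ m) {R : Type*} [Ring R]
    (t : Rˣ) (ht : ∀ r : R, (t : R) * r = r * (t : R))
    (Λ : (Fin m → ℤ) →ₗ[ℤ] (Fin m → ℤ) →ₗ[ℤ] ℤ)
    (hΛskew : ∀ g h, Λ g h = -Λ h g)
    (X : (Fin m → ℤ) → Rˣ)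
    (hX0 : X 0 = 1)
    (hXmul : ∀ g h, X g * X h = t ^ (Λ g h) * X (g + h))
    (k : Fin m) (b : Fin m → ℤ) (hbkk : b k = 0)
    (hcompat : ∀ j, Λ (stdE j) b = if j = k then 1 else 0)
    (X' : Fin m → Rˣ)
    (hX'ne : ∀ i, i ≠ k → X' i = X (stdE i))
    (hX'k : (X' k : R) = (X (-stdE k + bPlus b) : R) + (X (-stdE k + bMinus b) : R))
    (Lam' : Fin m → Fin m → ℤ)
    (hLam'skew : ∀ i j, Lam' i j = -Lam' j i)
    (hLam'nk : ∀ i j, i ≠ k → j ≠ k → Lam' i j = Λ (stdE i) (stdE j))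
    (hLam'k : ∀ i, i ≠ k → Lam' i k = Λ (stdE i) (-stdE k + bPlus b))
    (p q r : Fin m)
    (hpq : p ≠ q) (hpr : p ≠ r) (hqr : q ≠ r)
    (hpk : p ≠ k) (hqk : q ≠ k) (hrk : r ≠ k)
    (B : Fin m → Fin m → ℤ)
    (hBb : ∀ i, B i k = b i)
    (hbval : b = (-2 : ℤ) • stdE q + stdE p + stdE r)
    (hBkq : B k q = 2) (hBkp : B k p = -1) (hBkr : B k r = -1)
    (hBk0 : ∀ j, j ≠ q → j ≠ p → j ≠ r → B k j = 0)
    (B' : Fin m → Fin m → ℤ)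
    (hB' : ∀ i j, B' i j = if i = k ∨ j = k then -B i j
      else B i j + max (B i k) 0 * B k j + B i k * max (-(B k j)) 0)
    (s : ℤ) (hs : 0 ≤ s)
    (ind ind' : Fin m → ℤ)
    (hindk : ind k = -s) (hind'k : ind' k = s)
    (hind' : ∀ j, j ≠ k → ind' j = ind j - s * max (-(B j k)) 0)
    (L a : ℤ) (hL : 0 ≤ L) (ha : 0 ≤ a) (hc : 0 < 2 * L - s) :
    ∃ m0 : (Fin (2 * L - s).toNat → Bool) → ℤ,
      ((X (ind + L • col B q + (s - a) • col B k) : Rˣ) : R) =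
        ∑ h : Fin (2 * L - s).toNat → Bool,
          ((t ^ m0 h : Rˣ) : R) *
            ((XpPow t Lam' X' (ind' + L • col B' q
                + (a + ∑ i, if h i then (1 : ℤ) else 0) • col B' k) : Rˣ) : R) := by
  classical
  set yv : Fin m → ℤ := -stdE k + bPlus b with hyv
  set zv : Fin m → ℤ := -stdE k + bMinus b with hzv
  set U : Rˣ := X' k with hU
  set C : ℕ := (2 * L - s).toNat with hCdef
  set vb : Fin m → ℤ := ind + L • col B q + (s - a) • col B k with hvb
  have hC : (C : ℤ) = 2 * L - s := Int.toNat_of_nonneg hc.le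
  -- basic facts
  have hΛ0 : ∀ g : Fin m → ℤ, Λ g g = 0 := fun g => by have := hΛskew g g; omega
  have hXinv : ∀ g, (X g)⁻¹ = X (-g) := by
    intro g
    have h1 : X g * X (-g) = 1 := by
      rw [hXmul, map_neg, hΛ0, neg_zero, zpow_zero, one_mul, add_neg_cancel, hX0]
    exact inv_eq_of_mul_eq_one_right h1
  have hEmul : ∀ (u u' : Rˣ) (g g' : Fin m → ℤ),
      (∃ β : ℤ, u = t ^ β * X g) → (∃ β : ℤ, u' = t ^ β * X g') →
      ∃ β : ℤ, u * u' = t ^ β * X (g + g') := by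
    rintro u u' g g' ⟨β, rfl⟩ ⟨β', rfl⟩
    refine ⟨β + β' + Λ g g', ?_⟩
    rw [mul_assoc, aux_tshift t ht, hXmul, ← mul_assoc, ← zpow_add, ← mul_assoc, ← zpow_add]
  have hXpowN : ∀ (g : Fin m → ℤ) (N : ℕ), ∃ β : ℤ, X g ^ N = t ^ β * X ((N : ℤ) • g) := by
    intro g N
    induction N with
    | zero => exact ⟨0, by simp [hX0]⟩
    | succ N ih =>
      obtain ⟨β, hβ⟩ := ih
      refine ⟨β + Λ ((N : ℤ) • g) g, ?_⟩
      have hsm : (N : ℤ) • g + g = (((N + 1 : ℕ)) : ℤ) • g := by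
        push_cast
        rw [add_smul, one_smul]
      rw [pow_succ, hβ, mul_assoc, hXmul, ← mul_assoc, ← zpow_add, hsm]
  have hXzpow : ∀ (g : Fin m → ℤ) (n : ℤ), ∃ β : ℤ, X g ^ n = t ^ β * X (n • g) := by
    intro g n
    obtain ⟨N, rfl | rfl⟩ := n.eq_nat_or_neg
    · obtain ⟨β, hβ⟩ := hXpowN g N
      exact ⟨β, by rw [zpow_natCast, hβ]⟩
    · obtain ⟨β, hβ⟩ := hXpowN g N
      refine ⟨-β, ?_⟩
      rw [zpow_neg, zpow_natCast, hβ, mul_inv_rev, hXinv, ← zpow_neg,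
        ← aux_tcomm t ht, neg_smul]
  have hEzpow : ∀ (u : Rˣ) (g : Fin m → ℤ) (n : ℤ),
      (∃ β : ℤ, u = t ^ β * X g) → ∃ β : ℤ, u ^ n = t ^ β * X (n • g) := by
    rintro u g n ⟨β, rfl⟩
    obtain ⟨γ, hγ⟩ := hXzpow g n
    have hcm : Commute (t ^ β) (X g) := aux_tcomm t ht β (X g)
    refine ⟨β * n + γ, ?_⟩
    rw [hcm.mul_zpow, ← zpow_mul, hγ, ← mul_assoc, ← zpow_add]
  have hstd : ∀ i : Fin m, stdE i = fun j => if j = i then (1 : ℤ) else 0 := by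
    intro i
    funext j
    simp [stdE, Pi.single_apply]
  have hΛb : ∀ g : Fin m → ℤ, Λ g b = g k := by
    intro g
    have hg : g = ∑ j : Fin m, g j • stdE j := by
      funext j'
      rw [Finset.sum_apply]
      simp [hstd, Pi.smul_apply, smul_eq_mul, mul_ite, Finset.sum_ite_eq]
    calc Λ g b = Λ (∑ j : Fin m, g j • stdE j) b := by rw [← hg]
    _ = ∑ j : Fin m, g j * Λ (stdE j) b := by
        rw [map_sum, LinearMap.sum_apply]
        refine Finset.sum_congr rfl fun j _ => ?_
        rw [map_smul, LinearMap.smul_apply, smul_eq_mul]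
    _ = g k := by simp [hcompat, mul_ite, Finset.sum_ite_eq']
  have hyvzv : yv - zv = b := by
    funext j
    simp only [hyv, hzv, Pi.sub_apply, Pi.add_apply, Pi.neg_apply, bPlus, bMinus]
    omega
  have hΛyz : ∀ g : Fin m → ℤ, g k = 0 → Λ g zv = Λ g yv := by
    intro g hg
    have h1 : Λ g yv - Λ g zv = Λ g b := by rw [← map_sub, hyvzv]
    have h2 : Λ g b = 0 := by rw [hΛb g, hg]
    omega
  have hqgen : ∀ (g v : Fin m → ℤ), X g * X v = t ^ (2 * Λ g v) * (X v * X g) := by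
    intro g v
    rw [hXmul g v, hXmul v g, hΛskew v g, add_comm v g, ← mul_assoc, ← zpow_add]
    have h3 : (2 * Λ g v + -Λ g v) = Λ g v := by ring
    rw [h3]
  have hUq : ∀ g : Fin m → ℤ, g k = 0 → X g * U = t ^ (2 * Λ g yv) * (U * X g) := by
    intro g hg
    have e1 := hqgen g yv
    have e2 := hqgen g zv
    rw [hΛyz g hg] at e2
    apply Units.ext
    have c1 := congrArg (Units.val) e1
    have c2 := congrArg (Units.val) e2
    simp only [Units.val_mul] at c1 c2 ⊢
    rw [hX'k]
    rw [mul_add, c1, c2, add_mul, mul_add]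
  have hUzpow : ∀ (g : Fin m → ℤ), g k = 0 → ∀ n : ℤ,
      U ^ n * X g = t ^ (-(2 * Λ g yv) * n) * (X g * U ^ n) := by
    intro g hg n
    have h1 : U * X g = t ^ (-(2 * Λ g yv)) * (X g * U) := by
      rw [hUq g hg, ← mul_assoc, ← zpow_add, neg_add_cancel, zpow_zero, one_mul]
    exact aux_key t ht U (X g) (-(2 * Λ g yv)) h1 n
  -- k-th component of partial sums vanishes
  have hGk : ∀ (w : Fin m → ℤ) (l : List (Fin m)),
      ((l.map (fun i => if i = k then (0 : Fin m → ℤ) else w i • stdE i)).sum) k = 0 := by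
    intro w l
    induction l with
    | nil => simp
    | cons i l ih =>
      rw [List.map_cons, List.sum_cons, Pi.add_apply, ih, add_zero]
      by_cases hik : i = k
      · simp [hik]
      · simp [hik, hstd, Ne.symm hik]
  -- ordered product of mutated variables
  have hFprod : ∀ (w : Fin m → ℤ) (l : List (Fin m)),
      ∃ β : ℤ, (l.map (fun i => X' i ^ w i)).prod =
        t ^ β * X ((l.map (fun i => if i = k then (0 : Fin m → ℤ) else w i • stdE i)).sum)
          * U ^ ((l.map (fun i => if i = k then w i else 0)).sum) := by
    intro w l
    induction l with
    | nil => exact ⟨0, by simp [hX0]⟩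
    | cons i l ih =>
      obtain ⟨β, hβ⟩ := ih
      rw [List.map_cons, List.prod_cons, hβ, List.map_cons, List.sum_cons,
        List.map_cons, List.sum_cons]
      by_cases hik : i = k
      · rw [hik]
        rw [if_pos rfl, if_pos rfl, zero_add]
        have hGl0 : ((l.map (fun i => if i = k then (0 : Fin m → ℤ) else w i • stdE i)).sum) k = 0 :=
          hGk w l
        refine ⟨β + -(2 * Λ ((l.map (fun i => if i = k then (0 : Fin m → ℤ) else w i • stdE i)).sum) yv) * w k,
          ?_⟩
        calc U ^ w k * (t ^ β *
              X ((l.map (fun i => if i = k then (0 : Fin m → ℤ) else w i • stdE i)).sum)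
              * U ^ ((l.map (fun i => if i = k then w i else 0)).sum))
            = t ^ β * (U ^ w k *
              (X ((l.map (fun i => if i = k then (0 : Fin m → ℤ) else w i • stdE i)).sum)
              * U ^ ((l.map (fun i => if i = k then w i else 0)).sum))) := by
              rw [mul_assoc (t ^ β), aux_tshift t ht]
        _ = t ^ β * (U ^ w k *
              X ((l.map (fun i => if i = k then (0 : Fin m → ℤ) else w i • stdE i)).sum)
              * U ^ ((l.map (fun i => if i = k then w i else 0)).sum)) := by
              rw [mul_assoc (U ^ w k)]
        _ = t ^ β * (t ^ (-(2 * Λ ((l.map (fun i => if i = k then (0 : Fin m → ℤ) else w i • stdE i)).sum) yv) * w k) *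
              (X ((l.map (fun i => if i = k then (0 : Fin m → ℤ) else w i • stdE i)).sum) * U ^ w k)
              * U ^ ((l.map (fun i => if i = k then w i else 0)).sum)) := by
              rw [hUzpow _ hGl0 (w k)]
        _ = t ^ (β + -(2 * Λ ((l.map (fun i => if i = k then (0 : Fin m → ℤ) else w i • stdE i)).sum) yv) * w k) *
              X ((l.map (fun i => if i = k then (0 : Fin m → ℤ) else w i • stdE i)).sum)
              * U ^ (w k + (l.map (fun i => if i = k then w i else 0)).sum) := by
              rw [mul_assoc (t ^ (-(2 * Λ ((l.map (fun i => if i = k then (0 : Fin m → ℤ) else w i • stdE i)).sum) yv) * w k)),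
                mul_assoc (X ((l.map (fun i => if i = k then (0 : Fin m → ℤ) else w i • stdE i)).sum)),
                ← zpow_add U (w k), ← mul_assoc (t ^ β), ← zpow_add t β, ← mul_assoc]
      · rw [if_neg hik, if_neg hik, zero_add]
        obtain ⟨γ, hγ⟩ := hEzpow (X' i) (stdE i) (w i)
          ⟨0, by rw [zpow_zero, one_mul]; exact hX'ne i hik⟩
        obtain ⟨δ, hδ⟩ := hEmul (X' i ^ w i)
          (t ^ β * X ((l.map (fun i => if i = k then (0 : Fin m → ℤ) else w i • stdE i)).sum))
          (w i • stdE i) ((l.map (fun i => if i = k then (0 : Fin m → ℤ) else w i • stdE i)).sum)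
          ⟨γ, hγ⟩ ⟨β, rfl⟩
        refine ⟨δ, ?_⟩
        rw [← mul_assoc, hδ]
  -- coefficient / index-sum lemmas
  have hNval : ∀ v : Fin m → ℤ,
      ((List.finRange m).map (fun i => if i = k then v i else 0)).sum = v k := by
    intro v
    rw [← Fin.sum_univ_def]
    simp [Finset.sum_ite_eq']
  have hGsum : ∀ (v : Fin m → ℤ) (j : Fin m),
      (((List.finRange m).map (fun i => if i = k then (0 : Fin m → ℤ) else v i • stdE i)).sum) j
      = if j = k then 0 else v j := by
    intro v j
    rw [← Fin.sum_univ_def, Finset.sum_apply]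
    rw [Finset.sum_eq_single_of_mem j (Finset.mem_univ j)]
    · by_cases hj : j = k
      · simp [hj]
      · simp [hj, hstd]
    · intro i _ hij
      by_cases hik : i = k
      · simp [hik]
      · simp [hik, hstd, Ne.symm hij]
  -- expansion of the product of chosen factors
  have hEchoice : ∀ (h : Fin C → Bool) (l : List (Fin C)),
      ∃ β : ℤ, ((l.map (fun i => if h i then X yv else X zv)).prod) =
        t ^ β * X ((l.map (fun i => if h i then yv else zv)).sum) := by
    intro h l
    induction l with
    | nil => exact ⟨0, by simp [hX0]⟩
    | cons i l ih =>
      obtain ⟨β, hβ⟩ := ih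
      rw [List.map_cons, List.prod_cons, List.map_cons, List.sum_cons]
      have hhead : ∃ γ : ℤ, (if h i then X yv else X zv) = t ^ γ * X (if h i then yv else zv) := by
        refine ⟨0, ?_⟩
        rw [zpow_zero, one_mul]
        cases hhi : h i <;> simp [hhi]
      exact hEmul _ _ _ _ hhead ⟨β, hβ⟩
  have hstep1 : ∀ h : Fin C → Bool, ∃ β : ℤ,
      X vb * ((List.finRange C).map (fun i => if h i then X yv else X zv)).prod
        = t ^ β * X (vb + ((List.finRange C).map (fun i => if h i then yv else zv)).sum) := by
    intro h
    exact hEmul _ _ _ _ ⟨0, by rw [zpow_zero, one_mul]⟩ (hEchoice h (List.finRange C))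
  choose β₁ hβ₁ using hstep1
  choose β₂ hβ₂ using fun h : Fin C → Bool =>
    hFprod (ind' + L • col B' q + (a + ∑ i, if h i then (1 : ℤ) else 0) • col B' k)
      (List.finRange m)
  -- R-level expansion
  have hcoe : ∀ hh : Fin C → Bool,
      ((List.finRange C).map (fun i => if hh i then ((X yv : Rˣ) : R) else ((X zv : Rˣ) : R))).prod
      = ((((List.finRange C).map (fun i => if hh i then X yv else X zv)).prod : Rˣ) : R) := by
    intro hh
    have base : ((((List.finRange C).map (fun i => if hh i then X yv else X zv)).prod : Rˣ) : R)
        = (((List.finRange C).map (fun i => if hh i then X yv else X zv)).map Units.val).prod :=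
      (Units.coeHom R).map_list_prod _
    rw [base, List.map_map]
    refine congrArg List.prod (List.map_congr_left fun i _ => ?_)
    cases hhi : hh i <;> simp [hhi]
  have hB2 : ((X vb : Rˣ) : R) * (((U ^ C : Rˣ)) : R)
      = ∑ hh : Fin C → Bool,
        ((t ^ β₁ hh * X (vb + ((List.finRange C).map (fun i => if hh i then yv else zv)).sum) : Rˣ) : R) := by
    rw [Units.val_pow_eq_pow_val, hX'k, aux_binom, Finset.mul_sum]
    refine Finset.sum_congr rfl fun hh _ => ?_
    rw [hcoe hh, ← Units.val_mul, hβ₁ hh]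
  have hB3 : ((X vb : Rˣ) : R) = ∑ hh : Fin C → Bool,
      ((t ^ β₁ hh * X (vb + ((List.finRange C).map (fun i => if hh i then yv else zv)).sum)
        * ↑(U ^ C)⁻¹ : Rˣ) : R) := by
    have h2 := congrArg (fun x : R => x * (((U ^ C)⁻¹ : Rˣ) : R)) hB2
    rw [Units.mul_inv_cancel_right, Finset.sum_mul] at h2
    rw [h2]
    refine Finset.sum_congr rfl fun hh _ => ?_
    rw [← Units.val_mul]
  -- counting lemmas
  have hcntnot : ∀ h : Fin C → Bool,
      (∑ i : Fin C, if !(h i) then (1 : ℤ) else 0)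
        = (C : ℤ) - ∑ i : Fin C, if h i then (1 : ℤ) else 0 := by
    intro h
    rw [eq_sub_iff_add_eq, ← Finset.sum_add_distrib]
    have hterm : ∀ i : Fin C,
        ((if !(h i) then (1 : ℤ) else 0) + if h i then (1 : ℤ) else 0) = 1 := by
      intro i
      cases hhi : h i <;> simp [hhi]
    rw [Finset.sum_congr rfl fun i _ => hterm i, Finset.sum_const, Finset.card_univ,
      Fintype.card_fin, nsmul_eq_mul, mul_one]
  have hvec : ∀ (hh : Fin C → Bool) (j : Fin m),
      (((List.finRange C).map (fun i => if hh i then yv else zv)).sum) j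
      = (C : ℤ) * zv j + (∑ i : Fin C, if hh i then (1 : ℤ) else 0) * (yv j - zv j) := by
    intro hh j
    rw [← Fin.sum_univ_def, Finset.sum_apply]
    have hterm : ∀ i : Fin C, (if hh i then yv else zv) j
        = zv j + (if hh i then (1 : ℤ) else 0) * (yv j - zv j) := by
      intro i
      cases hhi : hh i <;> simp [hhi]
    rw [Finset.sum_congr rfl fun i _ => hterm i, Finset.sum_add_distrib, Finset.sum_const,
      ← Finset.sum_mul, Finset.card_univ, Fintype.card_fin, nsmul_eq_mul]
  have hwk : ∀ h : Fin C → Bool,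
      (ind' + L • col B' q + (a + ∑ i, if h i then (1 : ℤ) else 0) • col B' k) k = -(C : ℤ) := by
    intro h
    have h1 : B' k q = -2 := by rw [hB' k q, if_pos (Or.inl rfl), hBkq]
    have h2 : B' k k = 0 := by rw [hB' k k, if_pos (Or.inl rfl), hBb, hbkk, neg_zero]
    simp only [Pi.add_apply, Pi.smul_apply, col, smul_eq_mul, h1, h2, hind'k, mul_zero, add_zero]
    omega
  -- the key vector identity
  have hkey : ∀ h : Fin C → Bool,
      vb + ((List.finRange C).map (fun i => if !(h i) then yv else zv)).sum
      = ((List.finRange m).map (fun i => if i = k then (0 : Fin m → ℤ)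
          else (ind' + L • col B' q + (a + ∑ i', if h i' then (1 : ℤ) else 0) • col B' k) i • stdE i)).sum := by
    intro h
    funext j
    rw [Pi.add_apply, hvec (fun i => !(h i)) j,
      hGsum (ind' + L • col B' q + (a + ∑ i', if h i' then (1 : ℤ) else 0) • col B' k) j,
      hcntnot h]
    by_cases hj : j = k
    · rw [hj, if_pos rfl]
      simp only [hvb, hyv, hzv, Pi.add_apply, Pi.smul_apply, Pi.neg_apply, smul_eq_mul, col,
        bPlus, bMinus, hstd, hindk, hBkq, hBb, hbkk]
      simp only [ite_true, if_pos rfl]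
      simp
      omega
    · rw [if_neg hj]
      have h1 : B' j q = B j q + max (b j) 0 * 2 := by
        rw [hB' j q, if_neg (by simp [hj, hqk]), hBkq, hBb]
        norm_num
      have h2 : B' j k = -(b j) := by rw [hB' j k, if_pos (Or.inr rfl), hBb]
      simp only [hvb, hyv, hzv, Pi.add_apply, Pi.smul_apply, Pi.neg_apply, smul_eq_mul, col,
        bPlus, bMinus, hstd, h1, h2, hBb, hind' j hj, if_neg hj, hC]
      have hPQ : max (b j) 0 - max (-(b j)) 0 = b j := by omega
      linear_combination (-(s + (∑ i : Fin C, if h i then (1 : ℤ) else 0))) * hPQ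
  have collapse : ∀ (α β : ℤ) (v u : Rˣ), t ^ α * (t ^ β * v * u) = t ^ (α + β) * v * u := by
    intro α β v u
    rw [← mul_assoc, ← mul_assoc, ← zpow_add]
  -- per-h final identity
  have main : ∀ h : Fin C → Bool, ∃ μ : ℤ,
      t ^ β₁ (fun i => !(h i))
        * X (vb + ((List.finRange C).map (fun i => if !(h i) then yv else zv)).sum)
        * ↑(U ^ C)⁻¹
      = t ^ μ * XpPow t Lam' X'
          (ind' + L • col B' q + (a + ∑ i, if h i then (1 : ℤ) else 0) • col B' k) := by
    intro h
    refine ⟨β₁ (fun i => !(h i))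
      + (∑ i : Fin m, ∑ j : Fin m, if i < j then
          (ind' + L • col B' q + (a + ∑ i', if h i' then (1 : ℤ) else 0) • col B' k) i
          * (ind' + L • col B' q + (a + ∑ i', if h i' then (1 : ℤ) else 0) • col B' k) j
          * Lam' i j else 0)
      - β₂ h, ?_⟩
    unfold XpPow
    rw [hβ₂ h]
    rw [hNval]
    rw [hwk h]
    rw [zpow_neg U (C : ℤ), zpow_natCast U C]
    rw [← hkey h]
    rw [collapse, collapse]
    congr 2
    · congr 1
      ring
  choose μ hμ using main
  refine ⟨μ, ?_⟩
  let e : (Fin C → Bool) ≃ (Fin C → Bool) :=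
    ⟨fun h i => !(h i), fun h i => !(h i),
      fun h => funext fun i => Bool.not_not _, fun h => funext fun i => Bool.not_not _⟩
  calc ((X vb : Rˣ) : R)
      = ∑ hh : Fin C → Bool,
        ((t ^ β₁ hh * X (vb + ((List.finRange C).map (fun i => if hh i then yv else zv)).sum)
          * ↑(U ^ C)⁻¹ : Rˣ) : R) := hB3
  _ = ∑ h : Fin C → Bool,
        ((t ^ β₁ (fun i => !(h i))
          * X (vb + ((List.finRange C).map (fun i => if !(h i) then yv else zv)).sum)
          * ↑(U ^ C)⁻¹ : Rˣ) : R) :=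
      (Fintype.sum_equiv e
        (fun h => ((t ^ β₁ (fun i => !(h i))
          * X (vb + ((List.finRange C).map (fun i => if !(h i) then yv else zv)).sum)
          * ↑(U ^ C)⁻¹ : Rˣ) : R))
        (fun hh => ((t ^ β₁ hh
          * X (vb + ((List.finRange C).map (fun i => if hh i then yv else zv)).sum)
          * ↑(U ^ C)⁻¹ : Rˣ) : R))
        (fun h => rfl)).symm
  _ = ∑ h : Fin C → Bool,
        ((t ^ μ h : Rˣ) : R) *
          ((XpPow t Lam' X' (ind' + L • col B' q
            + (a + ∑ i, if h i then (1 : ℤ) else 0) • col B' k) : Rˣ) : R) := by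
      refine Finset.sum_congr rfl fun h _ => ?_
      rw [hμ h, Units.val_mul]
end

section
/- Let L ≥ 0 be an integer and suppose d̂ := s − 2L > 0. Then there exists a function m_0 : {0,1}^{d̂} → ℤ such that (X')^{ind' + L·B'e_{k−1}} = Σ_{h ∈ {0,1}^{d̂}} t^{m_0(h)} · X(ind + L·Be_{k−1} + (2L + Σ_i h_i)·Be_k). -/
namespace QTaux
variable {m : ℕ} {R : Type*} [Ring R]

lemma tcomm (t : Rˣ) (ht : ∀ r : R, (t : R) * r = r * (t : R)) (z : ℤ) (u : Rˣ) :
    t ^ z * u = u * t ^ z := by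
  have h : Commute t u := Units.ext (by simpa [Units.val_mul] using ht (u : R))
  exact (h.zpow_left z).eq

lemma tmul (t : Rˣ) (ht : ∀ r : R, (t : R) * r = r * (t : R)) (z1 z2 : ℤ) (u v : Rˣ) :
    (t ^ z1 * u) * (t ^ z2 * v) = t ^ (z1 + z2) * (u * v) := by
  rw [mul_assoc, ← mul_assoc u, ← tcomm t ht z2 u, mul_assoc, ← mul_assoc, ← zpow_add]

lemma tmulX (t : Rˣ) (z1 z2 : ℤ) (u : Rˣ) :
    t ^ z1 * (t ^ z2 * u) = t ^ (z1 + z2) * u := by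
  rw [← mul_assoc, ← zpow_add]

lemma Xzpow (t : Rˣ) (Λ : (Fin m → ℤ) →ₗ[ℤ] (Fin m → ℤ) →ₗ[ℤ] ℤ)
    (X : (Fin m → ℤ) → Rˣ)
    (hΛskew : ∀ g h, Λ g h = -Λ h g) (hX0 : X 0 = 1)
    (hXmul : ∀ g h, X g * X h = t ^ (Λ g h) * X (g + h)) (g : Fin m → ℤ) (z : ℤ) :
    X g ^ z = X (z • g) := by
  have hgg : ∀ v : Fin m → ℤ, Λ v v = 0 := fun v => by have := hΛskew v v; omega
  have hn : ∀ n : ℕ, X g ^ n = X ((n : ℤ) • g) := by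
    intro n
    induction n with
    | zero => simpa using hX0.symm
    | succ n ih =>
      rw [pow_succ, ih, hXmul]
      have h0 : Λ ((n : ℤ) • g) g = 0 := by
        rw [map_smul]; simp [hgg]
      rw [h0, zpow_zero, one_mul]
      congr 1
      push_cast
      rw [add_smul, one_smul]
  have hinv : ∀ v : Fin m → ℤ, (X v)⁻¹ = X (-v) := by
    intro v
    apply inv_eq_of_mul_eq_one_right
    rw [hXmul]
    have : Λ v (-v) = 0 := by rw [map_neg]; simp [hgg]
    rw [this, zpow_zero, one_mul, add_neg_cancel, hX0]
  obtain ⟨n, rfl | rfl⟩ := z.eq_nat_or_neg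
  · rw [zpow_natCast, hn]
  · rw [zpow_neg, zpow_natCast, hn, hinv, neg_smul]

def lamE (Λ : (Fin m → ℤ) →ₗ[ℤ] (Fin m → ℤ) →ₗ[ℤ] ℤ) : List (Fin m → ℤ) → ℤ
  | [] => 0
  | g :: gs => Λ g gs.sum + lamE Λ gs

lemma prodX (t : Rˣ) (ht : ∀ r : R, (t : R) * r = r * (t : R))
    (Λ : (Fin m → ℤ) →ₗ[ℤ] (Fin m → ℤ) →ₗ[ℤ] ℤ)
    (X : (Fin m → ℤ) → Rˣ) (hX0 : X 0 = 1)
    (hXmul : ∀ g h, X g * X h = t ^ (Λ g h) * X (g + h)) :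
    ∀ gs : List (Fin m → ℤ), (gs.map X).prod = t ^ lamE Λ gs * X gs.sum
  | [] => by simp [lamE, hX0]
  | g :: gs => by
    rw [List.map_cons, List.prod_cons, prodX t ht Λ X hX0 hXmul gs, ← mul_assoc,
      ← tcomm t ht, mul_assoc, hXmul, ← mul_assoc, ← zpow_add]
    rw [List.sum_cons, lamE]
    ring_nf

lemma sum_pow_expand (A C : R) : ∀ n : ℕ,
    (A + C) ^ n = ∑ h : Fin n → Bool,
      ((List.finRange n).map (fun i => if h i then A else C)).prod
  | 0 => by
    rw [pow_zero, Fintype.sum_unique]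
    simp
  | (n + 1) => by
    have key : ∀ (x : Bool) (h : Fin n → Bool),
        ((List.finRange (n+1)).map
          (fun i => if Fin.cons (α := fun _ => Bool) x h i then A else C)).prod
        = (if x then A else C) *
          ((List.finRange n).map (fun i => if h i then A else C)).prod := by
      intro x h
      rw [List.finRange_succ, List.map_cons, List.map_map, List.prod_cons]
      simp [Function.comp_def]
    rw [pow_succ', sum_pow_expand A C n, Finset.mul_sum]
    rw [← Fintype.sum_equiv (Fin.consEquiv (fun _ => Bool))
        (fun p => ((List.finRange (n+1)).map
          (fun i => if Fin.cons (α := fun _ => Bool) p.1 p.2 i then A else C)).prod)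
        (fun h => ((List.finRange (n+1)).map
          (fun i => if h i then A else C)).prod) (fun p => rfl)]
    rw [Fintype.sum_prod_type, Fintype.sum_bool]
    simp only [key, if_true, if_false]
    rw [← Finset.sum_add_distrib]
    apply Finset.sum_congr rfl
    intro h _
    simp [add_mul]

lemma val_prodX (X : (Fin m → ℤ) → Rˣ) (gs : List (Fin m → ℤ)) :
    (((gs.map X).prod : Rˣ) : R) = (gs.map (fun g => ((X g : Rˣ) : R))).prod := by
  induction gs with
  | nil => simp
  | cons g gs ih => simp [ih]

lemma finRange_split (k : Fin m) :
    List.finRange m = (List.finRange m).take (k : ℕ)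
      ++ k :: (List.finRange m).drop ((k : ℕ) + 1) := by
  have hkv : (k : ℕ) < (List.finRange m).length := by simpa using k.isLt
  conv_lhs => rw [← List.take_append_drop (k : ℕ) (List.finRange m)]
  rw [List.drop_eq_getElem_cons hkv]
  congr 1
  congr 1
  apply Fin.ext
  simp [List.getElem_finRange]

lemma not_mem_take (k : Fin m) : k ∉ (List.finRange m).take (k : ℕ) := by
  have hnd : ((List.finRange m).take (k : ℕ)
      ++ k :: (List.finRange m).drop ((k : ℕ) + 1)).Nodup := by
    rw [← finRange_split]; exact List.nodup_finRange m
  obtain ⟨-, -, hdisj⟩ := List.nodup_append'.mp hnd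
  exact fun hmem => hdisj hmem List.mem_cons_self

lemma not_mem_drop (k : Fin m) : k ∉ (List.finRange m).drop ((k : ℕ) + 1) := by
  have hnd : ((List.finRange m).take (k : ℕ)
      ++ k :: (List.finRange m).drop ((k : ℕ) + 1)).Nodup := by
    rw [← finRange_split]; exact List.nodup_finRange m
  obtain ⟨-, h2, -⟩ := List.nodup_append.mp hnd
  exact (List.nodup_cons.mp h2).1

lemma sum_split (k : Fin m) (a : Fin m → ℤ) :
    (((List.finRange m).take (k : ℕ)).map (fun i => a i • stdE i)).sum
      + (a k • stdE k
        + (((List.finRange m).drop ((k : ℕ) + 1)).map (fun i => a i • stdE i)).sum) = a := by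
  have hall : ((List.finRange m).map (fun i => a i • stdE i)).sum = a := by
    rw [← Fin.sum_univ_def]
    have h1 : (fun i : Fin m => a i • stdE i) = fun i => Pi.single i (a i) := by
      funext i j
      simp [stdE, Pi.single_apply, mul_ite]
    rw [h1, Finset.univ_sum_single]
  rw [finRange_split k, List.map_append, List.sum_append, List.map_cons, List.sum_cons] at hall
  exact hall

set_option maxHeartbeats 1000000 in
lemma engine (t : Rˣ) (ht : ∀ r : R, (t : R) * r = r * (t : R))
    (Λ : (Fin m → ℤ) →ₗ[ℤ] (Fin m → ℤ) →ₗ[ℤ] ℤ)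
    (hΛskew : ∀ g h, Λ g h = -Λ h g)
    (X : (Fin m → ℤ) → Rˣ) (hX0 : X 0 = 1)
    (hXmul : ∀ g h, X g * X h = t ^ (Λ g h) * X (g + h))
    (k : Fin m) (X' : Fin m → Rˣ)
    (hX'ne : ∀ i, i ≠ k → X' i = X (stdE i))
    (gA gC : Fin m → ℤ)
    (hX'k : ((X' k : Rˣ) : R) = ((X gA : Rˣ) : R) + ((X gC : Rˣ) : R))
    (a : Fin m → ℤ) (dn : ℕ) (hak : a k = (dn : ℤ)) (N : ℤ)
    (l1 l2 : List (Fin m → ℤ))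
    (hl1 : l1 = ((List.finRange m).take (k : ℕ)).map (fun i => a i • stdE i))
    (hl2 : l2 = ((List.finRange m).drop ((k : ℕ) + 1)).map (fun i => a i • stdE i))
    (lw : (Fin dn → Bool) → List (Fin m → ℤ))
    (hlw : ∀ h, lw h = (List.finRange dn).map (fun i => if h i then gA else gC)) :
    ((t ^ N * ((List.finRange m).map (fun i => X' i ^ a i)).prod : Rˣ) : R)
      = ∑ h : Fin dn → Bool,
        ((t ^ (N + ((lamE Λ l1 + ((lamE Λ (lw h) + lamE Λ l2) + Λ (lw h).sum l2.sum))
              + Λ l1.sum ((lw h).sum + l2.sum)))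
          * X (l1.sum + ((lw h).sum + l2.sum)) : Rˣ) : R) := by
  subst hl1 hl2
  have hXa : ∀ i, i ≠ k → X' i ^ a i = X (a i • stdE i) := fun i hi => by
    rw [hX'ne i hi, Xzpow t Λ X hΛskew hX0 hXmul]
  have hUl : (((List.finRange m).take (k : ℕ)).map (fun i => X' i ^ a i)).prod
      = ((((List.finRange m).take (k : ℕ)).map (fun i => a i • stdE i)).map X).prod := by
    rw [List.map_map]
    exact congrArg List.prod
      (List.map_congr_left (fun i hi => hXa i (fun h => not_mem_take k (h ▸ hi))))
  have hVl : (((List.finRange m).drop ((k : ℕ) + 1)).map (fun i => X' i ^ a i)).prod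
      = ((((List.finRange m).drop ((k : ℕ) + 1)).map (fun i => a i • stdE i)).map X).prod := by
    rw [List.map_map]
    exact congrArg List.prod
      (List.map_congr_left (fun i hi => hXa i (fun h => not_mem_drop k (h ▸ hi))))
  have hXk : X' k ^ a k = X' k ^ dn := by rw [hak, zpow_natCast]
  have hpow : ((X' k : Rˣ) : R) ^ dn
      = ∑ h : Fin dn → Bool, (((lw h).map X).prod : R) := by
    rw [hX'k, sum_pow_expand]
    apply Finset.sum_congr rfl
    intro h _
    rw [hlw h, val_prodX, List.map_map]
    congr 1
    apply List.map_congr_left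
    intro i _
    by_cases hi : h i <;> simp [hi]
  conv_lhs => rw [finRange_split k, List.map_append, List.prod_append,
    List.map_cons, List.prod_cons]
  rw [hXk, hUl, hVl]
  rw [Units.val_mul, Units.val_mul, Units.val_mul, Units.val_pow_eq_pow_val, hpow]
  rw [Finset.sum_mul, Finset.mul_sum, Finset.mul_sum]
  apply Finset.sum_congr rfl
  intro h _
  rw [← Units.val_mul, ← Units.val_mul, ← Units.val_mul]
  congr 1
  have s1 : ((lw h).map X).prod
      * ((((List.finRange m).drop ((k : ℕ) + 1)).map (fun i => a i • stdE i)).map X).prod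
      = t ^ ((lamE Λ (lw h)
            + lamE Λ (((List.finRange m).drop ((k : ℕ) + 1)).map (fun i => a i • stdE i)))
          + Λ (lw h).sum
              ((((List.finRange m).drop ((k : ℕ) + 1)).map (fun i => a i • stdE i)).sum))
        * X ((lw h).sum
            + (((List.finRange m).drop ((k : ℕ) + 1)).map (fun i => a i • stdE i)).sum) := by
    rw [prodX t ht Λ X hX0 hXmul, prodX t ht Λ X hX0 hXmul, tmul t ht, hXmul, tmulX]
  rw [s1, prodX t ht Λ X hX0 hXmul, tmul t ht, hXmul, tmulX, tmulX]
  congr 1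
  congr 1
  ring

end QTaux

theorem stmt4    {m : ℕ} (hm : 4 ≤ m) {R : Type*} [Ring R]
    (t : Rˣ) (ht : ∀ r : R, (t : R) * r = r * (t : R))
    (Λ : (Fin m → ℤ) →ₗ[ℤ] (Fin m → ℤ) →ₗ[ℤ] ℤ)
    (hΛskew : ∀ g h, Λ g h = -Λ h g)
    (X : (Fin m → ℤ) → Rˣ)
    (hX0 : X 0 = 1)
    (hXmul : ∀ g h, X g * X h = t ^ (Λ g h) * X (g + h))
    (k : Fin m) (b : Fin m → ℤ) (hbkk : b k = 0)
    (hcompat : ∀ j, Λ (stdE j) b = if j = k then 1 else 0)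
    (X' : Fin m → Rˣ)
    (hX'ne : ∀ i, i ≠ k → X' i = X (stdE i))
    (hX'k : (X' k : R) = (X (-stdE k + bPlus b) : R) + (X (-stdE k + bMinus b) : R))
    (Lam' : Fin m → Fin m → ℤ)
    (hLam'skew : ∀ i j, Lam' i j = -Lam' j i)
    (hLam'nk : ∀ i j, i ≠ k → j ≠ k → Lam' i j = Λ (stdE i) (stdE j))
    (hLam'k : ∀ i, i ≠ k → Lam' i k = Λ (stdE i) (-stdE k + bPlus b))
    (p q r : Fin m)
    (hpq : p ≠ q) (hpr : p ≠ r) (hqr : q ≠ r)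
    (hpk : p ≠ k) (hqk : q ≠ k) (hrk : r ≠ k)
    (B : Fin m → Fin m → ℤ)
    (hBb : ∀ i, B i k = b i)
    (hbval : b = (-2 : ℤ) • stdE q + stdE p + stdE r)
    (hBkq : B k q = 2) (hBkp : B k p = -1) (hBkr : B k r = -1)
    (hBk0 : ∀ j, j ≠ q → j ≠ p → j ≠ r → B k j = 0)
    (B' : Fin m → Fin m → ℤ)
    (hB' : ∀ i j, B' i j = if i = k ∨ j = k then -B i j
      else B i j + max (B i k) 0 * B k j + B i k * max (-(B k j)) 0)
    (s : ℤ) (hs : 0 ≤ s)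
    (ind ind' : Fin m → ℤ)
    (hindk : ind k = -s) (hind'k : ind' k = s)
    (hind' : ∀ j, j ≠ k → ind' j = ind j - s * max (-(B j k)) 0)
    (L : ℤ) (hL : 0 ≤ L) (hd : 0 < s - 2 * L) :
    ∃ m0 : (Fin (s - 2 * L).toNat → Bool) → ℤ,
      ((XpPow t Lam' X' (ind' + L • col B' q) : Rˣ) : R) =
        ∑ h : Fin (s - 2 * L).toNat → Bool,
          ((t ^ m0 h : Rˣ) : R) *
            ((X (ind + L • col B q
                + (2 * L + ∑ i, if h i then (1 : ℤ) else 0) • col B k) : Rˣ) : R) := by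
  classical
  set dn : ℕ := (s - 2 * L).toNat with hdnn
  have hdz : (dn : ℤ) = s - 2 * L := Int.toNat_of_nonneg hd.le
  set a : Fin m → ℤ := ind' + L • col B' q with ha
  have hB'kq : B' k q = -2 := by rw [hB' k q]; simp [hBkq]
  have hak : a k = (dn : ℤ) := by
    rw [ha, hdz]
    simp only [Pi.add_apply, Pi.smul_apply, smul_eq_mul, col]
    rw [hind'k, hB'kq]; ring
  have eng := QTaux.engine t ht Λ hΛskew X hX0 hXmul k X' hX'ne
    (-stdE k + bPlus b) (-stdE k + bMinus b) hX'k a dn hak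
    (-(∑ i : Fin m, ∑ j : Fin m, if i < j then a i * a j * Lam' i j else 0))
    (((List.finRange m).take (k : ℕ)).map (fun i => a i • stdE i))
    (((List.finRange m).drop ((k : ℕ) + 1)).map (fun i => a i • stdE i))
    rfl rfl
    (fun h => (List.finRange dn).map
      (fun i => if h i then -stdE k + bPlus b else -stdE k + bMinus b))
    (fun h => rfl)
  have hvec : ∀ h : Fin dn → Bool,
      ((((List.finRange m).take (k : ℕ)).map (fun i => a i • stdE i)).sum
        + (((List.finRange dn).map
            (fun i => if h i then -stdE k + bPlus b else -stdE k + bMinus b)).sum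
          + ((((List.finRange m).drop ((k : ℕ) + 1)).map (fun i => a i • stdE i)).sum)))
      = ind + L • col B q + (2 * L + ∑ i, if h i then (1 : ℤ) else 0) • col B k := by
    intro h
    have hsplitsum := QTaux.sum_split k a
    have hw : ((List.finRange dn).map
        (fun i => if h i then -stdE k + bPlus b else -stdE k + bMinus b)).sum
        = (dn : ℤ) • (-stdE k + bMinus b) + (∑ i, if h i then (1 : ℤ) else 0) • b := by
      rw [← Fin.sum_univ_def]
      have e1 : ∀ i : Fin dn, (if h i then -stdE k + bPlus b else -stdE k + bMinus b)
          = (-stdE k + bMinus b) + (if h i then (1 : ℤ) else 0) • b := by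
        intro i
        have hpm : bPlus b = bMinus b + b := by
          funext j; simp only [bPlus, bMinus, Pi.add_apply]; omega
        by_cases hi : h i
        · rw [if_pos hi, if_pos hi, hpm, one_smul]; abel
        · rw [if_neg hi, if_neg hi, zero_smul, add_zero]
      rw [Finset.sum_congr rfl (fun i _ => e1 i), Finset.sum_add_distrib, Finset.sum_const,
        Finset.card_univ, Fintype.card_fin, ← Finset.sum_smul]
      congr 1
    funext j
    have hcomp := congrFun hsplitsum j
    rw [hw]
    simp only [Pi.add_apply, Pi.smul_apply, Pi.neg_apply, smul_eq_mul, col, bMinus]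
      at hcomp ⊢
    by_cases hj : j = k
    · subst hj
      have h1 : stdE j j = 1 := by simp [stdE]
      rw [h1] at hcomp ⊢
      rw [hak, hdz] at hcomp
      rw [hbkk, hindk, hBkq, hBb j, hbkk, hdz]
      simp only [neg_zero, max_self]
      linear_combination hcomp
    · have h0 : stdE k j = 0 := by simp [stdE, Pi.single_eq_of_ne hj]
      rw [h0] at hcomp ⊢
      have haj : a j = ind' j + L * B' j q := by rw [ha]; simp [col]
      have hB'jq : B' j q = B j q + max (b j) 0 * 2 := by
        rw [hB' j q, if_neg (by simp [hj, hqk]), hBb j, hBkq]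
        norm_num
      have hind'j : ind' j = ind j - s * max (-(b j)) 0 := by
        rw [hind' j hj, hBb j]
      have hb : max (b j) 0 - max (-(b j)) 0 = b j := by omega
      rw [haj, hind'j, hB'jq] at hcomp
      rw [hBb j, hdz]
      linear_combination hcomp + (2 * L) * hb
  have unfold1 : ((XpPow t Lam' X' a : Rˣ) : R)
      = ((t ^ (-(∑ i : Fin m, ∑ j : Fin m, if i < j then a i * a j * Lam' i j else 0))
          * ((List.finRange m).map (fun i => X' i ^ a i)).prod : Rˣ) : R) := rfl
  refine ⟨fun h => (-(∑ i : Fin m, ∑ j : Fin m, if i < j then a i * a j * Lam' i j else 0))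
      + ((QTaux.lamE Λ (((List.finRange m).take (k : ℕ)).map (fun i => a i • stdE i))
          + ((QTaux.lamE Λ ((List.finRange dn).map
                (fun i => if h i then -stdE k + bPlus b else -stdE k + bMinus b))
              + QTaux.lamE Λ (((List.finRange m).drop ((k : ℕ) + 1)).map
                  (fun i => a i • stdE i)))
            + Λ ((List.finRange dn).map
                  (fun i => if h i then -stdE k + bPlus b else -stdE k + bMinus b)).sum
                ((((List.finRange m).drop ((k : ℕ) + 1)).map (fun i => a i • stdE i)).sum)))
        + Λ ((((List.finRange m).take (k : ℕ)).map (fun i => a i • stdE i)).sum)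
            (((List.finRange dn).map
                (fun i => if h i then -stdE k + bPlus b else -stdE k + bMinus b)).sum
              + ((((List.finRange m).drop ((k : ℕ) + 1)).map
                  (fun i => a i • stdE i)).sum))), ?_⟩
  rw [unfold1, eng]
  apply Finset.sum_congr rfl
  intro h _
  rw [hvec h, Units.val_mul]
end

section
/- Suppose s = 2L for an integer L ≥ 0 and let a be any integer. Then X(ind + L·Be_{k−1} + (s − a)·Be_k) = (X')^{ind' + L·B'e_{k−1} + a·B'e_k} in R. -/
namespace Stmt9Aux

/-- Sum of `g i j` over ordered pairs (i before j) in a list. -/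
def pairSum {m : ℕ} (g : Fin m → Fin m → ℤ) : List (Fin m) → ℤ
  | [] => 0
  | h :: tl => (tl.map (g h)).sum + pairSum g tl

lemma pairSum_eq {m : ℕ} (g : Fin m → Fin m → ℤ) :
    ∀ l : List (Fin m), l.Pairwise (· < ·) →
      pairSum g l
        = (l.map (fun i => (l.map (fun j => if i < j then g i j else 0)).sum)).sum
  | [], _ => rfl
  | h :: tl, hp => by
    obtain ⟨hh, htl⟩ := List.pairwise_cons.1 hp
    have ih := pairSum_eq g tl htl
    simp only [List.map_cons, List.sum_cons, pairSum]
    rw [if_neg (lt_irrefl h), zero_add]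
    have e1 : (tl.map (fun j => if h < j then g h j else 0)) = tl.map (g h) :=
      List.map_congr_left (fun j hj => if_pos (hh j hj))
    have e2 : (tl.map (fun i => (if i < h then g i h else 0)
          + (tl.map (fun j => if i < j then g i j else 0)).sum))
        = tl.map (fun i => (tl.map (fun j => if i < j then g i j else 0)).sum) := by
      refine List.map_congr_left (fun i hi => ?_)
      rw [if_neg (asymm (hh i hi)), zero_add]
    rw [e1, e2, ← ih]

variable {m : ℕ} {R : Type*} [Ring R]

lemma Xzpow (t : Rˣ) (Λ : (Fin m → ℤ) →ₗ[ℤ] (Fin m → ℤ) →ₗ[ℤ] ℤ)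
    (hΛskew : ∀ g h, Λ g h = -Λ h g)
    (X : (Fin m → ℤ) → Rˣ) (hX0 : X 0 = 1)
    (hXmul : ∀ g h, X g * X h = t ^ (Λ g h) * X (g + h))
    (g : Fin m → ℤ) (z : ℤ) : X g ^ z = X (z • g) := by
  have hgg : Λ g g = 0 := by have := hΛskew g g; omega
  have hnat : ∀ n : ℕ, X g ^ n = X ((n : ℤ) • g) := by
    intro n
    induction n with
    | zero => simp [hX0]
    | succ n ih =>
      rw [pow_succ, ih, hXmul]
      have h0 : Λ ((n : ℤ) • g) g = 0 := by
        rw [map_smul]; simp [hgg]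
      rw [h0]
      simp only [zpow_zero, one_mul]
      congr 1
      push_cast
      rw [add_smul, one_smul]
  have hinv : ∀ h : Fin m → ℤ, (X h)⁻¹ = X (-h) := by
    intro h
    have hhh : Λ h h = 0 := by have := hΛskew h h; omega
    have h1 : X h * X (-h) = 1 := by
      rw [hXmul]
      have h2 : Λ h (-h) = 0 := by rw [map_neg]; simp [hhh]
      rw [h2]; simp [hX0]
    exact inv_eq_of_mul_eq_one_right h1
  cases z with
  | ofNat n => rw [Int.ofNat_eq_coe, zpow_natCast, hnat]
  | negSucc n =>
    rw [zpow_negSucc, hnat (n + 1), hinv]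
    congr 1
    rw [Int.negSucc_eq]
    push_cast
    rw [neg_smul]

lemma monomial (t : Rˣ) (ht : ∀ r : R, (t : R) * r = r * (t : R))
    (Λ : (Fin m → ℤ) →ₗ[ℤ] (Fin m → ℤ) →ₗ[ℤ] ℤ)
    (hΛskew : ∀ g h, Λ g h = -Λ h g)
    (X : (Fin m → ℤ) → Rˣ) (hX0 : X 0 = 1)
    (hXmul : ∀ g h, X g * X h = t ^ (Λ g h) * X (g + h))
    (v : Fin m → ℤ) :
    ∀ l : List (Fin m),
      (l.map (fun i => X (stdE i) ^ v i)).prod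
        = t ^ (pairSum (fun i j => v i * v j * Λ (stdE i) (stdE j)) l)
            * X ((l.map (fun i => v i • stdE i)).sum)
  | [] => by simp [pairSum, hX0]
  | h :: tl => by
    have ih := monomial t ht Λ hΛskew X hX0 hXmul v tl
    have hcomm : ∀ (z : ℤ) (u : Rˣ), t ^ z * u = u * t ^ z := by
      intro z u
      have hc : Commute t u := Units.ext (ht (u : R))
      exact (hc.zpow_left z).eq
    have hD : Λ (v h • stdE h) ((tl.map fun i => v i • stdE i).sum)
        = (tl.map (fun j => v h * v j * Λ (stdE h) (stdE j))).sum := by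
      rw [map_smul, LinearMap.smul_apply, map_list_sum, List.map_map, smul_eq_mul,
        ← List.sum_map_mul_left]
      refine congrArg List.sum (List.map_congr_left fun j _ => ?_)
      show v h * (Λ (stdE h)) (v j • stdE j) = v h * v j * Λ (stdE h) (stdE j)
      rw [map_smul, smul_eq_mul]; ring
    simp only [List.map_cons, List.prod_cons, List.sum_cons, pairSum]
    rw [ih, Xzpow t Λ hΛskew X hX0 hXmul, ← mul_assoc,
      ← hcomm _ (X (v h • stdE h)), mul_assoc, hXmul, ← mul_assoc, ← zpow_add, hD]
    congr 2
    omega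

end Stmt9Aux

open Stmt9Aux

theorem stmt9    {m : ℕ} (hm : 4 ≤ m) {R : Type*} [Ring R]
    (t : Rˣ) (ht : ∀ r : R, (t : R) * r = r * (t : R))
    (Λ : (Fin m → ℤ) →ₗ[ℤ] (Fin m → ℤ) →ₗ[ℤ] ℤ)
    (hΛskew : ∀ g h, Λ g h = -Λ h g)
    (X : (Fin m → ℤ) → Rˣ)
    (hX0 : X 0 = 1)
    (hXmul : ∀ g h, X g * X h = t ^ (Λ g h) * X (g + h))
    (k : Fin m) (b : Fin m → ℤ) (hbkk : b k = 0)
    (hcompat : ∀ j, Λ (stdE j) b = if j = k then 1 else 0)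
    (X' : Fin m → Rˣ)
    (hX'ne : ∀ i, i ≠ k → X' i = X (stdE i))
    (hX'k : (X' k : R) = (X (-stdE k + bPlus b) : R) + (X (-stdE k + bMinus b) : R))
    (Lam' : Fin m → Fin m → ℤ)
    (hLam'skew : ∀ i j, Lam' i j = -Lam' j i)
    (hLam'nk : ∀ i j, i ≠ k → j ≠ k → Lam' i j = Λ (stdE i) (stdE j))
    (hLam'k : ∀ i, i ≠ k → Lam' i k = Λ (stdE i) (-stdE k + bPlus b))
    (p q r : Fin m)
    (hpq : p ≠ q) (hpr : p ≠ r) (hqr : q ≠ r)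
    (hpk : p ≠ k) (hqk : q ≠ k) (hrk : r ≠ k)
    (B : Fin m → Fin m → ℤ)
    (hBb : ∀ i, B i k = b i)
    (hbval : b = (-2 : ℤ) • stdE q + stdE p + stdE r)
    (hBkq : B k q = 2) (hBkp : B k p = -1) (hBkr : B k r = -1)
    (hBk0 : ∀ j, j ≠ q → j ≠ p → j ≠ r → B k j = 0)
    (B' : Fin m → Fin m → ℤ)
    (hB' : ∀ i j, B' i j = if i = k ∨ j = k then -B i j
      else B i j + max (B i k) 0 * B k j + B i k * max (-(B k j)) 0)
    (s : ℤ) (hs : 0 ≤ s)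
    (ind ind' : Fin m → ℤ)
    (hindk : ind k = -s) (hind'k : ind' k = s)
    (hind' : ∀ j, j ≠ k → ind' j = ind j - s * max (-(B j k)) 0)
    (L a : ℤ) (hL : 0 ≤ L) (hsL : s = 2 * L) :
    ((X (ind + L • col B q + (s - a) • col B k) : Rˣ) : R)
      = ((XpPow t Lam' X' (ind' + L • col B' q + a • col B' k) : Rˣ) : R) := by
  classical
  -- the common exponent vector
  set w : Fin m → ℤ := ind + L • col B q + (s - a) • col B k with hw
  have hwk : w k = 0 := by
    simp only [hw, Pi.add_apply, Pi.smul_apply, smul_eq_mul, col]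
    rw [hBkq, hBb, hbkk, hindk]
    ring_nf
    omega
  have hvec : ind' + L • col B' q + a • col B' k = w := by
    funext j
    simp only [hw, Pi.add_apply, Pi.smul_apply, smul_eq_mul, col]
    by_cases hj : j = k
    · subst hj
      have e1 : B' j q = -B j q := by rw [hB']; simp
      have e2 : B' j j = -B j j := by rw [hB']; simp
      rw [hind'k, hindk, e1, e2, hBkq, hBb, hbkk]
      ring_nf
      omega
    · have e1 : B' j q = B j q + max (B j k) 0 * 2 := by
        rw [hB', if_neg (by simp [hj, hqk] : ¬(j = k ∨ q = k)), hBkq]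
        norm_num
      have e2 : B' j k = -B j k := by
        rw [hB', if_pos (Or.inr rfl)]
      rw [hind' j hj, e1, e2, hsL]
      set mp := max (B j k) 0 with hmp
      set mm := max (-(B j k)) 0 with hmm
      have hx : mp - mm = B j k := by rw [hmp, hmm]; omega
      rw [← hx]
      ring
  rw [hvec]
  -- identify the exponents
  have hE : (∑ i : Fin m, ∑ j : Fin m, if i < j then w i * w j * Lam' i j else 0)
      = ∑ i : Fin m, ∑ j : Fin m,
          if i < j then w i * w j * Λ (stdE i) (stdE j) else 0 := by
    refine Finset.sum_congr rfl (fun i _ => Finset.sum_congr rfl (fun j _ => ?_))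
    by_cases hij : i < j
    · rw [if_pos hij, if_pos hij]
      by_cases hik : i = k
      · subst hik; rw [hwk]; ring
      · by_cases hjk : j = k
        · subst hjk; rw [hwk]; ring
        · rw [hLam'nk i j hik hjk]
    · rw [if_neg hij, if_neg hij]
  -- identify the product
  have hP : ((List.finRange m).map (fun i => X' i ^ w i))
      = (List.finRange m).map (fun i => X (stdE i) ^ w i) := by
    refine List.map_congr_left (fun i _ => ?_)
    by_cases hik : i = k
    · subst hik; rw [hwk]; simp
    · rw [hX'ne i hik]
  rw [XpPow, hE, hP,
    monomial t ht Λ hΛskew X hX0 hXmul w (List.finRange m)]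
  have hsum : (((List.finRange m).map (fun i => w i • stdE i)).sum) = w := by
    rw [← Fin.sum_univ_def]
    have hsingle : ∀ i : Fin m, w i • stdE i = Pi.single i (w i) := by
      intro i
      unfold stdE
      funext j
      by_cases hj : j = i
      · subst hj; simp
      · simp [Pi.single_eq_of_ne hj]
    simp only [hsingle]
    exact Finset.univ_sum_single w
  have hpair : pairSum (fun i j => w i * w j * Λ (stdE i) (stdE j)) (List.finRange m)
      = ∑ i : Fin m, ∑ j : Fin m, if i < j then w i * w j * Λ (stdE i) (stdE j) else 0 := by
    rw [pairSum_eq _ _ (List.pairwise_lt_finRange m), ← Fin.sum_univ_def]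
    refine Finset.sum_congr rfl (fun i _ => ?_)
    rw [← Fin.sum_univ_def]
  rw [hsum, hpair, ← mul_assoc, ← zpow_add, neg_add_cancel, zpow_zero, one_mul]
end

section
/- Let s ≥ 1 be an integer, let λ ∈ {0,1}^{s+1}, let 1 ≤ i ≤ s, and let λ' be obtained from λ by exchanging the entries λ_i and λ_{i+1}. Then b_λ − a_λ = b_{λ'} − a_{λ'}. -/
/-- `a_λ = #{ i ∈ {1,…,s} : λ_i = λ_{i+1} = 0 }`. -/
def aLam (s : ℕ) (l : Fin (s + 1) → Bool) : ℕ :=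
  (Finset.univ.filter fun i : Fin s => l i.castSucc = false ∧ l i.succ = false).card

/-- `b_λ = #{ i ∈ {1,…,s} : λ_i = λ_{i+1} = 1 } + δ_{λ_1,1} + δ_{λ_{s+1},1}`. -/
def bLam (s : ℕ) (l : Fin (s + 1) → Bool) : ℕ :=
  (Finset.univ.filter fun i : Fin s => l i.castSucc = true ∧ l i.succ = true).card
    + (if l 0 = true then 1 else 0) + (if l (Fin.last s) = true then 1 else 0)

open Finset in
lemma key_baLam (s : ℕ) (l : Fin (s + 1) → Bool) :
    (bLam s l : ℤ) - (aLam s l : ℤ)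
      = 2 * (∑ j : Fin (s + 1), (if l j = true then (1:ℤ) else 0)) - s := by
  unfold aLam bLam
  have hb : ((univ.filter fun i : Fin s => l i.castSucc = true ∧ l i.succ = true).card : ℤ)
      = ∑ i : Fin s, (if l i.castSucc = true ∧ l i.succ = true then (1:ℤ) else 0) := by
    rw [Finset.card_filter]; push_cast; simp
  have ha : ((univ.filter fun i : Fin s => l i.castSucc = false ∧ l i.succ = false).card : ℤ)
      = ∑ i : Fin s, (if l i.castSucc = false ∧ l i.succ = false then (1:ℤ) else 0) := by
    rw [Finset.card_filter]; push_cast; simp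
  have hpt : ∀ i : Fin s,
      (if l i.castSucc = true ∧ l i.succ = true then (1:ℤ) else 0)
        - (if l i.castSucc = false ∧ l i.succ = false then (1:ℤ) else 0)
      = (if l i.castSucc = true then (1:ℤ) else 0)
        + (if l i.succ = true then (1:ℤ) else 0) - 1 := by
    intro i
    cases hc : l i.castSucc <;> cases hd : l i.succ <;> simp
  have hsum : ∑ i : Fin s,
      ((if l i.castSucc = true then (1:ℤ) else 0)
        + (if l i.succ = true then (1:ℤ) else 0) - 1)
      = (∑ i : Fin s, (if l i.castSucc = true then (1:ℤ) else 0))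
        + (∑ i : Fin s, (if l i.succ = true then (1:ℤ) else 0)) - s := by
    rw [Finset.sum_sub_distrib, Finset.sum_add_distrib]; simp
  have hc : ∑ j : Fin (s + 1), (if l j = true then (1:ℤ) else 0)
      = (∑ i : Fin s, (if l i.castSucc = true then (1:ℤ) else 0))
        + (if l (Fin.last s) = true then (1:ℤ) else 0) :=
    Fin.sum_univ_castSucc _
  have hd : ∑ j : Fin (s + 1), (if l j = true then (1:ℤ) else 0)
      = (if l 0 = true then (1:ℤ) else 0)
        + ∑ i : Fin s, (if l i.succ = true then (1:ℤ) else 0) :=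
    Fin.sum_univ_succ _
  have hdiff : (∑ i : Fin s, (if l i.castSucc = true ∧ l i.succ = true then (1:ℤ) else 0))
      - (∑ i : Fin s, (if l i.castSucc = false ∧ l i.succ = false then (1:ℤ) else 0))
      = (∑ i : Fin s, (if l i.castSucc = true then (1:ℤ) else 0))
        + (∑ i : Fin s, (if l i.succ = true then (1:ℤ) else 0)) - s := by
    rw [← Finset.sum_sub_distrib, Finset.sum_congr rfl (fun i _ => hpt i), hsum]
  push_cast
  linarith [hdiff, hc, hd, hb, ha]

theorem stmt11 (s : ℕ) (hs : 1 ≤ s) (l l' : Fin (s + 1) → Bool) (i : Fin s)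
    (h1 : l' i.castSucc = l i.succ) (h2 : l' i.succ = l i.castSucc)
    (h3 : ∀ j, j ≠ i.castSucc → j ≠ i.succ → l' j = l j) :
    (bLam s l : ℤ) - (aLam s l : ℤ) = (bLam s l' : ℤ) - (aLam s l' : ℤ) := by
  rw [key_baLam, key_baLam]
  have hne : i.castSucc ≠ i.succ := (Fin.castSucc_lt_succ (i := i)).ne
  have hl' : l' = fun j => l (Equiv.swap i.castSucc i.succ j) := by
    funext j
    by_cases hj1 : j = i.castSucc
    · subst hj1; rw [Equiv.swap_apply_left]; exact h1
    · by_cases hj2 : j = i.succ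
      · subst hj2; rw [Equiv.swap_apply_right]; exact h2
      · rw [Equiv.swap_apply_of_ne_of_ne hj1 hj2]; exact h3 j hj1 hj2
  have : ∑ j : Fin (s + 1), (if l' j = true then (1:ℤ) else 0)
      = ∑ j : Fin (s + 1), (if l j = true then (1:ℤ) else 0) := by
    rw [hl']
    exact Equiv.sum_comp (Equiv.swap i.castSucc i.succ)
      (fun j => if l j = true then (1:ℤ) else 0)
  rw [this]
end

section
/- Let g ∈ ℤ^m with g_k = 0. Then the following identities hold in R: (a) X(g) = (X')^g; (b) X(g + Be_{k+2}) + X(g + Be_k + Be_{k+2}) = (X')^{g + B'e_{k+2}}; (c) X(g + Be_{k−1} + Be_k + Be_{k+2}) = (X')^{g + B'e_{k−1} + B'e_{k+2}}. (These are the polynomial properties of the partition bijection between canonical submodules of the string modules τ_{k−1} → τ_k → τ_{k+2} and τ_{k−1} → τ_{k+2}, where g plays the role of the index.) -/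
namespace S13
variable {m : ℕ} {R : Type*} [Ring R]

lemma tcomm (t : Rˣ) (ht : ∀ r : R, (t : R) * r = r * (t : R)) (n : ℤ) (u : Rˣ) :
    t ^ n * u = u * t ^ n := ((Commute.zpow_left (Units.ext (ht u)) n)).eq

lemma lam_self (Λ : (Fin m → ℤ) →ₗ[ℤ] (Fin m → ℤ) →ₗ[ℤ] ℤ)
    (hΛskew : ∀ g h, Λ g h = -Λ h g) (g : Fin m → ℤ) : Λ g g = 0 := by
  have := hΛskew g g; omega

lemma X_neg (t : Rˣ) (Λ : (Fin m → ℤ) →ₗ[ℤ] (Fin m → ℤ) →ₗ[ℤ] ℤ)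
    (hΛskew : ∀ g h, Λ g h = -Λ h g)
    (X : (Fin m → ℤ) → Rˣ) (hX0 : X 0 = 1)
    (hXmul : ∀ g h, X g * X h = t ^ (Λ g h) * X (g + h)) (g : Fin m → ℤ) :
    X (-g) = (X g)⁻¹ := by
  have h : X g * X (-g) = 1 := by
    rw [hXmul, map_neg, lam_self Λ hΛskew, neg_zero, zpow_zero, one_mul, add_neg_cancel, hX0]
  exact eq_inv_of_mul_eq_one_right h

lemma X_pow (t : Rˣ) (Λ : (Fin m → ℤ) →ₗ[ℤ] (Fin m → ℤ) →ₗ[ℤ] ℤ)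
    (hΛskew : ∀ g h, Λ g h = -Λ h g)
    (X : (Fin m → ℤ) → Rˣ) (hX0 : X 0 = 1)
    (hXmul : ∀ g h, X g * X h = t ^ (Λ g h) * X (g + h)) (g : Fin m → ℤ) :
    ∀ n : ℕ, X g ^ n = X (n • g)
  | 0 => by simp [hX0]
  | (n+1) => by
      rw [pow_succ, X_pow t Λ hΛskew X hX0 hXmul g n, hXmul, succ_nsmul]
      have : Λ (n • g) g = 0 := by
        rw [← natCast_zsmul, map_smul]; simp [lam_self Λ hΛskew]
      rw [this, zpow_zero, one_mul]

lemma X_zpow (t : Rˣ) (Λ : (Fin m → ℤ) →ₗ[ℤ] (Fin m → ℤ) →ₗ[ℤ] ℤ)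
    (hΛskew : ∀ g h, Λ g h = -Λ h g)
    (X : (Fin m → ℤ) → Rˣ) (hX0 : X 0 = 1)
    (hXmul : ∀ g h, X g * X h = t ^ (Λ g h) * X (g + h)) (g : Fin m → ℤ) :
    ∀ n : ℤ, X g ^ n = X (n • g)
  | Int.ofNat n => by
      rw [Int.ofNat_eq_natCast, zpow_natCast, X_pow t Λ hΛskew X hX0 hXmul g n,
        natCast_zsmul]
  | Int.negSucc n => by
      rw [zpow_negSucc, X_pow t Λ hΛskew X hX0 hXmul g (n+1),
        ← X_neg t Λ hΛskew X hX0 hXmul]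
      congr 1
      rw [Int.negSucc_eq, neg_smul]
      norm_cast

lemma prod_sorted (t : Rˣ) (ht : ∀ r : R, (t : R) * r = r * (t : R))
    (Λ : (Fin m → ℤ) →ₗ[ℤ] (Fin m → ℤ) →ₗ[ℤ] ℤ)
    (hΛskew : ∀ g h, Λ g h = -Λ h g)
    (X : (Fin m → ℤ) → Rˣ) (hX0 : X 0 = 1)
    (hXmul : ∀ g h, X g * X h = t ^ (Λ g h) * X (g + h))
    (a : Fin m → ℤ) :
    ∀ l : List (Fin m), l.Pairwise (· < ·) →
      (l.map (fun i => X (stdE i) ^ a i)).prod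
        = t ^ (∑ i ∈ l.toFinset, ∑ j ∈ l.toFinset,
            if i < j then a i * a j * Λ (stdE i) (stdE j) else 0)
          * X (∑ i ∈ l.toFinset, a i • stdE i) := by
  intro l hl
  induction l with
  | nil => simp [hX0]
  | cons x l ih =>
    rw [List.pairwise_cons] at hl
    obtain ⟨hx, hl⟩ := hl
    have hxl : x ∉ l.toFinset := by
      intro hmem
      exact lt_irrefl x (hx x (List.mem_toFinset.mp hmem))
    have hS : ∑ i ∈ (x :: l).toFinset, a i • stdE i
        = a x • stdE x + ∑ i ∈ l.toFinset, a i • stdE i := by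
      rw [List.toFinset_cons, Finset.sum_insert hxl]
    have hE : ∑ i ∈ (x :: l).toFinset, ∑ j ∈ (x :: l).toFinset,
          (if i < j then a i * a j * Λ (stdE i) (stdE j) else 0)
        = Λ (a x • stdE x) (∑ i ∈ l.toFinset, a i • stdE i)
          + ∑ i ∈ l.toFinset, ∑ j ∈ l.toFinset,
            (if i < j then a i * a j * Λ (stdE i) (stdE j) else 0) := by
      rw [List.toFinset_cons, Finset.sum_insert hxl]
      simp only [Finset.sum_insert hxl]
      have h1 : (if x < x then a x * a x * Λ (stdE x) (stdE x) else 0) = 0 := by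
        simp
      have h2 : ∀ i ∈ l.toFinset,
          (if i < x then a i * a x * Λ (stdE i) (stdE x) else 0) = 0 := by
        intro i hi
        have : x < i := hx i (List.mem_toFinset.mp hi)
        rw [if_neg (by omega)]
      have h3 : Λ (a x • stdE x) (∑ i ∈ l.toFinset, a i • stdE i)
          = ∑ j ∈ l.toFinset, (if x < j then a x * a j * Λ (stdE x) (stdE j) else 0) := by
        rw [map_smul, map_sum]
        simp only [LinearMap.smul_apply, Finset.smul_sum]
        refine Finset.sum_congr rfl fun j hj => ?_
        have hxj : x < j := hx j (List.mem_toFinset.mp hj)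
        rw [if_pos hxj, map_smul]
        simp [smul_eq_mul]; ring
      rw [h1, h3, Finset.sum_add_distrib]
      rw [Finset.sum_congr rfl h2]
      simp
    rw [List.map_cons, List.prod_cons, ih hl, hS, hE,
      X_zpow t Λ hΛskew X hX0 hXmul, ← mul_assoc, ← tcomm t ht, mul_assoc, hXmul,
      ← mul_assoc, ← zpow_add]
    ring_nf

lemma sum_smul_stdE (a : Fin m → ℤ) : ∑ i : Fin m, a i • stdE i = a := by
  have : ∀ i : Fin m, a i • stdE i = Pi.single i (a i) := by
    intro i
    funext j
    simp [stdE, Pi.single_apply, smul_eq_mul]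
  simp only [this]
  exact Finset.univ_sum_single a

lemma XpPow_eq (t : Rˣ) (ht : ∀ r : R, (t : R) * r = r * (t : R))
    (Λ : (Fin m → ℤ) →ₗ[ℤ] (Fin m → ℤ) →ₗ[ℤ] ℤ)
    (hΛskew : ∀ g h, Λ g h = -Λ h g)
    (X : (Fin m → ℤ) → Rˣ) (hX0 : X 0 = 1)
    (hXmul : ∀ g h, X g * X h = t ^ (Λ g h) * X (g + h))
    (k : Fin m) (X' : Fin m → Rˣ) (hX'ne : ∀ i, i ≠ k → X' i = X (stdE i))
    (Lam' : Fin m → Fin m → ℤ)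
    (hLam'nk : ∀ i j, i ≠ k → j ≠ k → Lam' i j = Λ (stdE i) (stdE j))
    (a : Fin m → ℤ) (hak : a k = 0) :
    XpPow t Lam' X' a = X a := by
  unfold XpPow
  have hmap : (List.finRange m).map (fun i => X' i ^ a i)
      = (List.finRange m).map (fun i => X (stdE i) ^ a i) := by
    refine List.map_congr_left fun i _ => ?_
    by_cases hik : i = k
    · subst hik; rw [hak, zpow_zero, zpow_zero]
    · rw [hX'ne i hik]
  rw [hmap, prod_sorted t ht Λ hΛskew X hX0 hXmul a _ (List.pairwise_lt_finRange m),
    List.toFinset_finRange, sum_smul_stdE]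
  have hexp : (∑ i : Fin m, ∑ j : Fin m, if i < j then a i * a j * Lam' i j else 0)
      = ∑ i : Fin m, ∑ j : Fin m, if i < j then a i * a j * Λ (stdE i) (stdE j) else 0 := by
    refine Finset.sum_congr rfl fun i _ => Finset.sum_congr rfl fun j _ => ?_
    by_cases hik : i = k
    · subst hik; rw [hak]; simp
    · by_cases hjk : j = k
      · subst hjk; rw [hak]; simp
      · rw [hLam'nk i j hik hjk]
  rw [hexp, ← mul_assoc, ← zpow_add]
  simp

lemma lam_expand (Λ : (Fin m → ℤ) →ₗ[ℤ] (Fin m → ℤ) →ₗ[ℤ] ℤ)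
    (a : Fin m → ℤ) (s : Finset (Fin m)) (w : Fin m → ℤ) :
    Λ (∑ i ∈ s, a i • stdE i) w = ∑ i ∈ s, a i * Λ (stdE i) w := by
  simp only [map_sum, map_smul, LinearMap.sum_apply, LinearMap.smul_apply, smul_eq_mul]

lemma lam_expand' (Λ : (Fin m → ℤ) →ₗ[ℤ] (Fin m → ℤ) →ₗ[ℤ] ℤ)
    (a : Fin m → ℤ) (s : Finset (Fin m)) (w : Fin m → ℤ) :
    Λ w (∑ i ∈ s, a i • stdE i) = ∑ i ∈ s, a i * Λ w (stdE i) := by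
  simp only [map_sum, map_smul, smul_eq_mul]

lemma combine (t : Rˣ) (ht : ∀ r : R, (t : R) * r = r * (t : R))
    (Λ : (Fin m → ℤ) →ₗ[ℤ] (Fin m → ℤ) →ₗ[ℤ] ℤ)
    (X : (Fin m → ℤ) → Rˣ)
    (hXmul : ∀ g h, X g * X h = t ^ (Λ g h) * X (g + h))
    (N E1 E2 : ℤ) (S1 S2 w : Fin m → ℤ)
    (hexp : N = E1 + E2 + Λ w S2 + Λ S1 (w + S2)) :
    t ^ (-N) * ((t ^ E1 * X S1) * (X w * (t ^ E2 * X S2))) = X (S1 + (w + S2)) := by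
  rw [show X w * (t ^ E2 * X S2) = t ^ (E2 + Λ w S2) * X (w + S2) by
    rw [← mul_assoc, ← tcomm t ht E2 (X w), mul_assoc, hXmul, ← mul_assoc, ← zpow_add]]
  rw [mul_assoc (t ^ E1)]
  rw [show X S1 * (t ^ (E2 + Λ w S2) * X (w + S2))
      = t ^ (E2 + Λ w S2 + Λ S1 (w + S2)) * X (S1 + (w + S2)) by
    rw [← mul_assoc, ← tcomm t ht _ (X S1), mul_assoc, hXmul, ← mul_assoc, ← zpow_add]]
  rw [← mul_assoc, ← mul_assoc, ← zpow_add, ← zpow_add]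
  rw [show -N + E1 + (E2 + Λ w S2 + Λ S1 (w + S2)) = 0 by rw [hexp]; ring,
    zpow_zero, one_mul]

lemma Nval (Λ : (Fin m → ℤ) →ₗ[ℤ] (Fin m → ℤ) →ₗ[ℤ] ℤ)
    (k : Fin m) (b : Fin m → ℤ)
    (Lam' : Fin m → Fin m → ℤ)
    (hLam'skew : ∀ i j, Lam' i j = -Lam' j i)
    (hLam'nk : ∀ i j, i ≠ k → j ≠ k → Lam' i j = Λ (stdE i) (stdE j))
    (hLam'k : ∀ i, i ≠ k → Lam' i k = Λ (stdE i) (-stdE k + bPlus b))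
    (a : Fin m → ℤ) (hak : a k = 1)
    (s1 s2 : Finset (Fin m)) (hm1 : ∀ i, i ∈ s1 ↔ i < k) (hm2 : ∀ j, j ∈ s2 ↔ k < j) :
    (∑ i : Fin m, ∑ j : Fin m, if i < j then a i * a j * Lam' i j else 0)
      = (∑ i ∈ s1, ∑ j ∈ s1, if i < j then a i * a j * Λ (stdE i) (stdE j) else 0)
        + (∑ i ∈ s2, ∑ j ∈ s2, if i < j then a i * a j * Λ (stdE i) (stdE j) else 0)
        + Λ (∑ i ∈ s1, a i • stdE i) (∑ j ∈ s2, a j • stdE j)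
        + Λ (∑ i ∈ s1, a i • stdE i) (-stdE k + bPlus b)
        - Λ (∑ j ∈ s2, a j • stdE j) (-stdE k + bPlus b) := by
  have hk2 : k ∉ s2 := by simp [hm2]
  have hdisj : Disjoint s1 (insert k s2) := by
    rw [Finset.disjoint_left]
    intro i hi hmem
    have h1 : i < k := (hm1 i).mp hi
    rcases Finset.mem_insert.mp hmem with h | h
    · exact absurd h1 (by simp [h])
    · exact absurd ((hm2 i).mp h) (by omega)
  have huniv : (Finset.univ : Finset (Fin m)) = s1 ∪ insert k s2 := by
    ext i
    simp only [Finset.mem_univ, true_iff, Finset.mem_union, Finset.mem_insert, hm1, hm2]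
    rcases lt_trichotomy i k with h | h | h <;> tauto
  have p1 : (∑ i ∈ s1, ∑ j ∈ s1, if i < j then a i * a j * Lam' i j else 0)
      = ∑ i ∈ s1, ∑ j ∈ s1, if i < j then a i * a j * Λ (stdE i) (stdE j) else 0 := by
    refine Finset.sum_congr rfl fun i hi => Finset.sum_congr rfl fun j hj => ?_
    rw [hLam'nk i j (Fin.ne_of_lt ((hm1 i).mp hi)) (Fin.ne_of_lt ((hm1 j).mp hj))]
  have p9 : (∑ i ∈ s2, ∑ j ∈ s2, if i < j then a i * a j * Lam' i j else 0)
      = ∑ i ∈ s2, ∑ j ∈ s2, if i < j then a i * a j * Λ (stdE i) (stdE j) else 0 := by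
    refine Finset.sum_congr rfl fun i hi => Finset.sum_congr rfl fun j hj => ?_
    rw [hLam'nk i j (Fin.ne_of_gt ((hm2 i).mp hi)) (Fin.ne_of_gt ((hm2 j).mp hj))]
  have p2 : (∑ i ∈ s1, if i < k then a i * a k * Lam' i k else 0)
      = Λ (∑ i ∈ s1, a i • stdE i) (-stdE k + bPlus b) := by
    rw [lam_expand]
    refine Finset.sum_congr rfl fun i hi => ?_
    have h1 : i < k := (hm1 i).mp hi
    rw [if_pos h1, hak, hLam'k i (Fin.ne_of_lt h1)]; ring
  have p3 : (∑ i ∈ s1, ∑ j ∈ s2, if i < j then a i * a j * Lam' i j else 0)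
      = Λ (∑ i ∈ s1, a i • stdE i) (∑ j ∈ s2, a j • stdE j) := by
    rw [lam_expand]
    refine Finset.sum_congr rfl fun i hi => ?_
    rw [lam_expand', Finset.mul_sum]
    refine Finset.sum_congr rfl fun j hj => ?_
    have h1 : i < k := (hm1 i).mp hi
    have h2 : k < j := (hm2 j).mp hj
    rw [if_pos (lt_trans h1 h2), hLam'nk i j (Fin.ne_of_lt h1) (Fin.ne_of_gt h2)]; ring
  have p4 : (∑ j ∈ s1, if k < j then a k * a j * Lam' k j else 0) = 0 := by
    refine Finset.sum_eq_zero fun j hj => ?_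
    have h1 : j < k := (hm1 j).mp hj
    rw [if_neg (by omega)]
  have p5 : (if k < k then a k * a k * Lam' k k else 0) = 0 := by simp
  have p6 : (∑ j ∈ s2, if k < j then a k * a j * Lam' k j else 0)
      = -Λ (∑ j ∈ s2, a j • stdE j) (-stdE k + bPlus b) := by
    rw [lam_expand, ← Finset.sum_neg_distrib]
    refine Finset.sum_congr rfl fun j hj => ?_
    have h2 : k < j := (hm2 j).mp hj
    rw [if_pos h2, hak, hLam'skew k j, hLam'k j (Fin.ne_of_gt h2)]; ring
  have p7 : (∑ i ∈ s2, ∑ j ∈ s1, if i < j then a i * a j * Lam' i j else 0) = 0 := by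
    refine Finset.sum_eq_zero fun i hi => Finset.sum_eq_zero fun j hj => ?_
    have h1 : k < i := (hm2 i).mp hi
    have h2 : j < k := (hm1 j).mp hj
    rw [if_neg (by omega)]
  have p8 : (∑ i ∈ s2, if i < k then a i * a k * Lam' i k else 0) = 0 := by
    refine Finset.sum_eq_zero fun i hi => ?_
    have h1 : k < i := (hm2 i).mp hi
    rw [if_neg (by omega)]
  calc (∑ i : Fin m, ∑ j : Fin m, if i < j then a i * a j * Lam' i j else 0)
      = ∑ i ∈ s1 ∪ insert k s2, ∑ j ∈ s1 ∪ insert k s2,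
          if i < j then a i * a j * Lam' i j else 0 := by rw [← huniv]
    _ = (∑ i ∈ s1, ((∑ j ∈ s1, if i < j then a i * a j * Lam' i j else 0)
          + ((if i < k then a i * a k * Lam' i k else 0)
            + ∑ j ∈ s2, if i < j then a i * a j * Lam' i j else 0)))
        + (((∑ j ∈ s1, if k < j then a k * a j * Lam' k j else 0)
          + ((if k < k then a k * a k * Lam' k k else 0)
            + ∑ j ∈ s2, if k < j then a k * a j * Lam' k j else 0))
        + ∑ i ∈ s2, ((∑ j ∈ s1, if i < j then a i * a j * Lam' i j else 0)
          + ((if i < k then a i * a k * Lam' i k else 0)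
            + ∑ j ∈ s2, if i < j then a i * a j * Lam' i j else 0))) := by
        rw [Finset.sum_union hdisj, Finset.sum_insert hk2]
        congr 1
        · exact Finset.sum_congr rfl fun i _ => by
            rw [Finset.sum_union hdisj, Finset.sum_insert hk2]
        · congr 1
          · rw [Finset.sum_union hdisj, Finset.sum_insert hk2]
          · exact Finset.sum_congr rfl fun i _ => by
              rw [Finset.sum_union hdisj, Finset.sum_insert hk2]
    _ = _ := by
        rw [Finset.sum_add_distrib, Finset.sum_add_distrib, Finset.sum_add_distrib,
          Finset.sum_add_distrib, p1, p2, p3, p4, p5, p6, p7, p8, p9]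
        ring

lemma exchange (t : Rˣ) (ht : ∀ r : R, (t : R) * r = r * (t : R))
    (Λ : (Fin m → ℤ) →ₗ[ℤ] (Fin m → ℤ) →ₗ[ℤ] ℤ)
    (hΛskew : ∀ g h, Λ g h = -Λ h g)
    (X : (Fin m → ℤ) → Rˣ) (hX0 : X 0 = 1)
    (hXmul : ∀ g h, X g * X h = t ^ (Λ g h) * X (g + h))
    (k : Fin m) (b : Fin m → ℤ)
    (hcompat : ∀ j, Λ (stdE j) b = if j = k then 1 else 0)
    (X' : Fin m → Rˣ) (hX'ne : ∀ i, i ≠ k → X' i = X (stdE i))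
    (hX'k : (X' k : R) = (X (-stdE k + bPlus b) : R) + (X (-stdE k + bMinus b) : R))
    (Lam' : Fin m → Fin m → ℤ)
    (hLam'skew : ∀ i j, Lam' i j = -Lam' j i)
    (hLam'nk : ∀ i j, i ≠ k → j ≠ k → Lam' i j = Λ (stdE i) (stdE j))
    (hLam'k : ∀ i, i ≠ k → Lam' i k = Λ (stdE i) (-stdE k + bPlus b))
    (a : Fin m → ℤ) (hak : a k = 1) :
    ((XpPow t Lam' X' a : Rˣ) : R)
      = ((X ((a - stdE k) + (-stdE k + bPlus b)) : Rˣ) : R)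
        + ((X ((a - stdE k) + (-stdE k + bMinus b)) : Rˣ) : R) := by
  obtain ⟨L₁, L₂, hsplit⟩ := List.append_of_mem (List.mem_finRange k)
  have hpw := List.pairwise_lt_finRange m
  rw [hsplit, List.pairwise_append] at hpw
  obtain ⟨h1, hcons, hcross⟩ := hpw
  rw [List.pairwise_cons] at hcons
  obtain ⟨hx2, h2⟩ := hcons
  have hx1 : ∀ i ∈ L₁, i < k := fun i hi => hcross i hi k List.mem_cons_self
  have hm1 : ∀ i, i ∈ L₁.toFinset ↔ i < k := by
    intro i
    constructor
    · exact fun hi => hx1 i (List.mem_toFinset.mp hi)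
    · intro hik
      have : i ∈ List.finRange m := List.mem_finRange i
      rw [hsplit, List.mem_append, List.mem_cons] at this
      rcases this with h | h | h
      · exact List.mem_toFinset.mpr h
      · omega
      · exact absurd (hx2 i h) (by omega)
  have hm2 : ∀ j, j ∈ L₂.toFinset ↔ k < j := by
    intro j
    constructor
    · exact fun hj => hx2 j (List.mem_toFinset.mp hj)
    · intro hjk
      have : j ∈ List.finRange m := List.mem_finRange j
      rw [hsplit, List.mem_append, List.mem_cons] at this
      rcases this with h | h | h
      · exact absurd (hx1 j h) (by omega)
      · omega
      · exact List.mem_toFinset.mpr h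
  -- abbreviations
  set s1 := L₁.toFinset
  set s2 := L₂.toFinset
  set S1 := ∑ i ∈ s1, a i • stdE i with hS1def
  set S2 := ∑ j ∈ s2, a j • stdE j with hS2def
  set E1 := ∑ i ∈ s1, ∑ j ∈ s1, if i < j then a i * a j * Λ (stdE i) (stdE j) else 0 with hE1def
  set E2 := ∑ i ∈ s2, ∑ j ∈ s2, if i < j then a i * a j * Λ (stdE i) (stdE j) else 0 with hE2def
  set u := -stdE k + bPlus b with hudef
  set v := -stdE k + bMinus b with hvdef
  set N := ∑ i : Fin m, ∑ j : Fin m, if i < j then a i * a j * Lam' i j else 0 with hNdef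
  -- sum fact
  have hsum : S1 + S2 = a - stdE k := by
    have hdisj12 : Disjoint s1 s2 := by
      rw [Finset.disjoint_left]
      intro i hi hj
      have := (hm1 i).mp hi
      have := (hm2 i).mp hj
      omega
    have hunion : s1 ∪ s2 = Finset.univ.erase k := by
      ext i
      simp only [Finset.mem_union, hm1, hm2, Finset.mem_erase, Finset.mem_univ, and_true]
      omega
    rw [hS1def, hS2def, ← Finset.sum_union hdisj12, hunion,
      Finset.sum_erase_eq_sub (Finset.mem_univ k), sum_smul_stdE, hak, one_smul]
  -- compat facts
  have hcompat1 : Λ S1 b = 0 := by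
    rw [hS1def, lam_expand]
    refine Finset.sum_eq_zero fun i hi => ?_
    rw [hcompat i, if_neg (Fin.ne_of_lt ((hm1 i).mp hi)), mul_zero]
  have hcompat2 : Λ S2 b = 0 := by
    rw [hS2def, lam_expand]
    refine Finset.sum_eq_zero fun i hi => ?_
    rw [hcompat i, if_neg (Fin.ne_of_gt ((hm2 i).mp hi)), mul_zero]
  have huv : u - v = b := by
    funext i
    simp only [hudef, hvdef, Pi.sub_apply, Pi.add_apply, Pi.neg_apply, bPlus, bMinus]
    omega
  -- N value
  have hN : N = E1 + E2 + Λ S1 S2 + Λ S1 u - Λ S2 u := by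
    have := Nval Λ k b Lam' hLam'skew hLam'nk hLam'k a hak s1 s2 hm1 hm2
    rw [hNdef, this]
  -- the unit-level product
  have hunit : XpPow t Lam' X' a
      = t ^ (-N) * ((t ^ E1 * X S1) * (X' k * (t ^ E2 * X S2))) := by
    unfold XpPow
    rw [← hNdef, hsplit, List.map_append, List.prod_append, List.map_cons, List.prod_cons]
    have e1 : (L₁.map fun i => X' i ^ a i).prod = t ^ E1 * X S1 := by
      rw [show L₁.map (fun i => X' i ^ a i) = L₁.map (fun i => X (stdE i) ^ a i) from
        List.map_congr_left fun i hi => by rw [hX'ne i (Fin.ne_of_lt (hx1 i hi))]]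
      rw [prod_sorted t ht Λ hΛskew X hX0 hXmul a L₁ h1]
    have e2 : (L₂.map fun i => X' i ^ a i).prod = t ^ E2 * X S2 := by
      rw [show L₂.map (fun i => X' i ^ a i) = L₂.map (fun i => X (stdE i) ^ a i) from
        List.map_congr_left fun i hi => by rw [hX'ne i (Fin.ne_of_gt (hx2 i hi))]]
      rw [prod_sorted t ht Λ hΛskew X hX0 hXmul a L₂ h2]
    rw [e1, e2, hak, zpow_one]
  -- two monomial evaluations
  have keyu : t ^ (-N) * ((t ^ E1 * X S1) * (X u * (t ^ E2 * X S2))) = X ((a - stdE k) + u) := by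
    rw [show (a - stdE k) + u = S1 + (u + S2) by rw [← hsum]; abel]
    refine combine t ht Λ X hXmul N E1 E2 S1 S2 u ?_
    rw [hN, show Λ S1 (u + S2) = Λ S1 u + Λ S1 S2 from map_add _ _ _]
    have : Λ u S2 = -Λ S2 u := hΛskew u S2
    omega
  have keyv : t ^ (-N) * ((t ^ E1 * X S1) * (X v * (t ^ E2 * X S2))) = X ((a - stdE k) + v) := by
    rw [show (a - stdE k) + v = S1 + (v + S2) by rw [← hsum]; abel]
    refine combine t ht Λ X hXmul N E1 E2 S1 S2 v ?_
    have e1 : Λ S1 u - Λ S1 v = 0 := by rw [← map_sub, huv, hcompat1]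
    have e2 : Λ S2 u - Λ S2 v = 0 := by rw [← map_sub, huv, hcompat2]
    have e3 : Λ v S2 = -Λ S2 v := hΛskew v S2
    rw [hN, show Λ S1 (v + S2) = Λ S1 v + Λ S1 S2 from map_add _ _ _]
    omega
  -- assemble in R
  rw [hunit, ← keyu, ← keyv]
  simp only [Units.val_mul, hX'k]
  noncomm_ring

end S13

theorem stmt13    {m : ℕ} (hm : 5 ≤ m) {R : Type*} [Ring R]
    (t : Rˣ) (ht : ∀ r : R, (t : R) * r = r * (t : R))
    (Λ : (Fin m → ℤ) →ₗ[ℤ] (Fin m → ℤ) →ₗ[ℤ] ℤ)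
    (hΛskew : ∀ g h, Λ g h = -Λ h g)
    (X : (Fin m → ℤ) → Rˣ)
    (hX0 : X 0 = 1)
    (hXmul : ∀ g h, X g * X h = t ^ (Λ g h) * X (g + h))
    (k : Fin m) (b : Fin m → ℤ) (hbkk : b k = 0)
    (hcompat : ∀ j, Λ (stdE j) b = if j = k then 1 else 0)
    (X' : Fin m → Rˣ)
    (hX'ne : ∀ i, i ≠ k → X' i = X (stdE i))
    (hX'k : (X' k : R) = (X (-stdE k + bPlus b) : R) + (X (-stdE k + bMinus b) : R))
    (Lam' : Fin m → Fin m → ℤ)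
    (hLam'skew : ∀ i j, Lam' i j = -Lam' j i)
    (hLam'nk : ∀ i j, i ≠ k → j ≠ k → Lam' i j = Λ (stdE i) (stdE j))
    (hLam'k : ∀ i, i ≠ k → Lam' i k = Λ (stdE i) (-stdE k + bPlus b))
    (p q q2 r : Fin m)
    (hpq : p ≠ q) (hpq2 : p ≠ q2) (hpr : p ≠ r)
    (hqq2 : q ≠ q2) (hqr : q ≠ r) (hq2r : q2 ≠ r)
    (hpk : p ≠ k) (hqk : q ≠ k) (hq2k : q2 ≠ k) (hrk : r ≠ k)
    (B : Fin m → Fin m → ℤ)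
    (hBb : ∀ i, B i k = b i)
    (hbval : b = -stdE q - stdE q2 + stdE p + stdE r)
    (hBkq : B k q = 1) (hBkq2 : B k q2 = 1) (hBkp : B k p = -1) (hBkr : B k r = -1)
    (hBk0 : ∀ j, j ≠ q → j ≠ q2 → j ≠ p → j ≠ r → B k j = 0)
    (B' : Fin m → Fin m → ℤ)
    (hB' : ∀ i j, B' i j = if i = k ∨ j = k then -B i j
      else B i j + max (B i k) 0 * B k j + B i k * max (-(B k j)) 0)
    (g : Fin m → ℤ) (hg : g k = 0) :
    ((X g : Rˣ) : R) = ((XpPow t Lam' X' g : Rˣ) : R)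
    ∧ ((X (g + col B r) : Rˣ) : R) + ((X (g + col B k + col B r) : Rˣ) : R)
        = ((XpPow t Lam' X' (g + col B' r) : Rˣ) : R)
    ∧ ((X (g + col B q + col B k + col B r) : Rˣ) : R)
        = ((XpPow t Lam' X' (g + col B' q + col B' r) : Rˣ) : R) := by
  have hsk : ∀ j : Fin m, stdE k j = if j = k then 1 else 0 := fun j => Pi.single_apply k 1 j
  refine ⟨?_, ?_, ?_⟩
  · rw [S13.XpPow_eq t ht Λ hΛskew X hX0 hXmul k X' hX'ne Lam' hLam'nk g hg]
  · -- part (b)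
    have ha : (g + col B' r) k = 1 := by
      show g k + B' k r = 1
      rw [hg, hB' k r, if_pos (Or.inl rfl), hBkr]
      norm_num
    rw [S13.exchange t ht Λ hΛskew X hX0 hXmul k b hcompat X' hX'ne hX'k Lam'
      hLam'skew hLam'nk hLam'k (g + col B' r) ha]
    have hv1 : (g + col B' r) - stdE k + (-stdE k + bPlus b) = g + col B k + col B r := by
      funext i
      show g i + B' i r - stdE k i + (-stdE k i + max (b i) 0) = g i + B i k + B i r
      by_cases hik : i = k
      · rw [hik, hg, hB' k r, if_pos (Or.inl rfl), hBkr, hBb k, hbkk, hsk k, if_pos rfl]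
        norm_num
      · rw [hB' i r, if_neg (by tauto), hBkr, hBb i, hsk i, if_neg hik]
        simp
        omega
    have hv2 : (g + col B' r) - stdE k + (-stdE k + bMinus b) = g + col B r := by
      funext i
      show g i + B' i r - stdE k i + (-stdE k i + max (-(b i)) 0) = g i + B i r
      by_cases hik : i = k
      · rw [hik, hg, hB' k r, if_pos (Or.inl rfl), hBkr, hbkk, hsk k, if_pos rfl]
        norm_num
      · rw [hB' i r, if_neg (by tauto), hBkr, hBb i, hsk i, if_neg hik]
        simp
        omega
    rw [hv1, hv2]
    exact add_comm _ _
  · -- part (c)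
    have hvec : g + col B q + col B k + col B r = g + col B' q + col B' r := by
      funext i
      show g i + B i q + B i k + B i r = g i + B' i q + B' i r
      by_cases hik : i = k
      · rw [hik, hB' k q, hB' k r, if_pos (Or.inl rfl), if_pos (Or.inl rfl),
          hBkq, hBkr, hBb k, hbkk]
        norm_num
      · rw [hB' i q, hB' i r, if_neg (by tauto), if_neg (by tauto), hBkq, hBkr, hBb i]
        simp
        omega
    have hWk : (g + col B' q + col B' r) k = 0 := by
      show g k + B' k q + B' k r = 0
      rw [hg, hB' k q, hB' k r, if_pos (Or.inl rfl), if_pos (Or.inl rfl), hBkq, hBkr]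
      norm_num
    rw [hvec, S13.XpPow_eq t ht Λ hΛskew X hX0 hXmul k X' hX'ne Lam' hLam'nk _ hWk]
end
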